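/- arXiv:2002.08095 — 6 statements merged into one kernel-verified Lean document; each statement's English description precedes it below -/
import Mathlib

section
/- In the one-dimensional LQR lower-bound setting with T ≥ 12000, for any deterministic learning algorithm, with probability at least 7/8 at least (2/3)T of the states x_1,…,x_T satisfy |x_t| ≥ 2σ/5. -/
open MeasureTheory ProbabilityTheory

noncomputable section LQRLowerBound

/-- The state sequence of the scalar LQR system `x_{t+1} = a·x_t + b·u_t + w_t`
with `x_1 = 0` and actions `u_t = π_t (x_1, …, x_t)` chosen by the deterministic
learning algorithm `π`; the noise `w` is indexed from `1`. -/
def lqrState (a b : ℝ) (π : (t : ℕ) → (Fin t → ℝ) → ℝ) (w : ℕ → ℝ) : ℕ → ℝ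
  | 0 => 0
  | 1 => 0
  | t + 2 =>
      a * lqrState a b π w (t + 1)
        + b * π (t + 1) (fun i : Fin (t + 1) => lqrState a b π w (i + 1))
        + w (t + 1)
  termination_by t => t
  decreasing_by all_goals omega

/-- The action `u_t = π_t (x_1, …, x_t)` of the learning algorithm. -/
def lqrAction (a b : ℝ) (π : (t : ℕ) → (Fin t → ℝ) → ℝ) (w : ℕ → ℝ) (t : ℕ) : ℝ :=
  π t fun i : Fin t => lqrState a b π w (i + 1)

/-- The random sign `χ`, as a real number `±1`. -/
def signVal (s : Bool) : ℝ := if s then 1 else -1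

/-- Extend finitely many noise values `(w_1, …, w_T)` to a sequence indexed by `ℕ`
(with `w_t = g (t-1)` for `1 ≤ t ≤ T`). -/
def noiseSeq {T : ℕ} (g : Fin T → ℝ) : ℕ → ℝ := fun t =>
  if h : 1 ≤ t ∧ t ≤ T then g ⟨t - 1, by omega⟩ else 0

/-- The joint law of the uniform random sign `χ = ±1` and the i.i.d. `N(0,σ²)`
noises `w_1, …, w_T`. -/
def lqrMeasure (σ : ℝ) (T : ℕ) : Measure (Bool × (Fin T → ℝ)) :=
  ((PMF.uniformOfFintype Bool).toMeasure).prod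
    (Measure.pi fun _ : Fin T => gaussianReal 0 ⟨σ ^ 2, sq_nonneg σ⟩)

/-- The state `x_t` as a random variable on the sample space, where `b = χ·√ε`. -/
def X (a ε : ℝ) (π : (t : ℕ) → (Fin t → ℝ) → ℝ) {T : ℕ}
    (ω : Bool × (Fin T → ℝ)) (t : ℕ) : ℝ :=
  lqrState a (signVal ω.1 * Real.sqrt ε) π (noiseSeq ω.2) t

/-- The action `u_t` as a random variable on the sample space, where `b = χ·√ε`. -/
def U (a ε : ℝ) (π : (t : ℕ) → (Fin t → ℝ) → ℝ) {T : ℕ}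
    (ω : Bool × (Fin T → ℝ)) (t : ℕ) : ℝ :=
  lqrAction a (signVal ω.1 * Real.sqrt ε) π (noiseSeq ω.2) t

/-- The optimal controller `k⋆ = −abp⋆/(1+b²p⋆)` (whose sign depends on `χ`),
where `b = χ·√ε` and `b² = ε`. -/
def kOpt (a ε pstar : ℝ) (s : Bool) : ℝ :=
  -(a * (signVal s * Real.sqrt ε) * pstar) / (1 + ε * pstar)

/-- The total cost `Σ_{t=1}^T (x_t² + u_t²)`. -/
def lqrTotalCost (a ε : ℝ) (π : (t : ℕ) → (Fin t → ℝ) → ℝ) (T : ℕ)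
    (ω : Bool × (Fin T → ℝ)) : ℝ :=
  ∑ t ∈ Finset.Icc 1 T, (X a ε π ω t ^ 2 + U a ε π ω t ^ 2)

/-- The regret `R_T = Σ_{t=1}^T (x_t² + u_t² − σ²p⋆)`. -/
def lqrRegret (σ a ε pstar : ℝ) (π : (t : ℕ) → (Fin t → ℝ) → ℝ) (T : ℕ)
    (ω : Bool × (Fin T → ℝ)) : ℝ :=
  ∑ t ∈ Finset.Icc 1 T, (X a ε π ω t ^ 2 + U a ε π ω t ^ 2 - σ ^ 2 * pstar)

/-!
Conditionally on `x_1, …, x_t`, the next state is `x_{t+1} = m_t + w_t` with a drift `m_t`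
fixed by the past and fresh noise `w_t ~ N(0, σ²)`. Whatever the algorithm does, the Gaussian
density is at most `1/(σ√(2π))`, so `|x_{t+1}| < 2σ/5` has conditional probability
`q_t ≤ 8/25`. The centred indicators `1{|x_{t+1}| < 2σ/5} - q_t` are martingale differences,
hence orthogonal, each of variance at most `1/4`; Chebyshev's inequality bounds the probability
that more than `8T/25 + (T/75 - 1)` states are small by `T / (4 (T/75 - 1)²) ≤ 1/8`.
The argument works for every fixed `b`, hence for each value of the sign `χ`.
-/

open Function

section ResampleCoordinate

variable {ι : Type*} [Fintype ι] [DecidableEq ι] {α : ι → Type*} [∀ i, MeasurableSpace (α i)]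
  {μ : ∀ i, Measure (α i)} [∀ i, IsProbabilityMeasure (μ i)]

theorem measurePreserving_update_pi (j : ι) :
    MeasurePreserving (fun p : (∀ i, α i) × α j => update p.1 j p.2)
      ((Measure.pi μ).prod (μ j)) (Measure.pi μ) := by
  refine ⟨by fun_prop, (Measure.pi_eq fun s hs => ?_).symm⟩
  have hpre : (fun p : (∀ i, α i) × α j => update p.1 j p.2) ⁻¹' Set.univ.pi s
      = Set.univ.pi (update s j Set.univ) ×ˢ s j := by
    ext ⟨g, y⟩
    simp only [Set.mem_preimage, Set.mem_univ_pi, Set.mem_prod]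
    rw [forall_update_iff g (p := fun i x => x ∈ s i), forall_update_iff s (p := fun i t => g i ∈ t)]
    simp only [Set.mem_univ, true_and, and_comm]
  rw [Measure.map_apply (by fun_prop) (.univ_pi hs), hpre, Measure.prod_prod, Measure.pi_pi,
    ← Finset.prod_erase_mul _ (fun i => μ i (update s j Set.univ i)) (Finset.mem_univ j),
    ← Finset.prod_erase_mul _ (fun i => μ i (s i)) (Finset.mem_univ j)]
  simp only [update_self, measure_univ, mul_one]
  congr 1
  exact Finset.prod_congr rfl fun i hi => by rw [update_of_ne (Finset.ne_of_mem_erase hi)]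

theorem integral_eq_integral_integral_update {F : (∀ i, α i) → ℝ}
    (hF : Integrable F (Measure.pi μ)) (j : ι) :
    ∫ g, F g ∂Measure.pi μ = ∫ g, ∫ y, F (update g j y) ∂μ j ∂Measure.pi μ := by
  have hmp := measurePreserving_update_pi (μ := μ) j
  calc ∫ g, F g ∂Measure.pi μ
      = ∫ p, F (update p.1 j p.2) ∂(Measure.pi μ).prod (μ j) := by
        rw [← integral_map hmp.measurable.aemeasurable
          (by rw [hmp.map_eq]; exact hF.aestronglyMeasurable), hmp.map_eq]
    _ = _ := integral_prod _ (hmp.integrable_comp_of_integrable hF)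

theorem integral_sq_sum_eq_sum_integral_sq [LinearOrder ι] {Z : ι → (∀ i, α i) → ℝ}
    (hZ : ∀ j, MemLp (Z j) 2 (Measure.pi μ))
    (hpast : ∀ i j g y, i < j → Z i (update g j y) = Z i g)
    (hmean : ∀ j g, ∫ y, Z j (update g j y) ∂μ j = 0) :
    ∫ g, (∑ j, Z j g) ^ 2 ∂Measure.pi μ = ∑ j, ∫ g, Z j g ^ 2 ∂Measure.pi μ := by
  have hint (i j : ι) : Integrable (fun g => Z i g * Z j g) (Measure.pi μ) :=
    (hZ i).integrable_mul (hZ j)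
  have horth (i j : ι) (hij : i < j) : ∫ g, Z i g * Z j g ∂Measure.pi μ = 0 := by
    rw [integral_eq_integral_integral_update (hint i j) j]
    simp_rw [hpast i j _ _ hij, integral_const_mul, hmean, mul_zero, integral_zero]
  simp_rw [sq, Finset.sum_mul_sum]
  rw [integral_finsetSum _ fun i _ => integrable_finsetSum _ fun j _ => hint i j]
  refine Finset.sum_congr rfl fun i _ => ?_
  rw [integral_finsetSum _ fun j _ => hint i j, Finset.sum_eq_single i _ (by simp)]
  intro j _ hji
  rcases hji.lt_or_gt with hlt | hgt
  · simpa only [mul_comm] using horth j i hlt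
  · exact horth i j hgt

end ResampleCoordinate

open Real in
theorem gaussianPDFReal_le_inv_sqrt (μ : ℝ) (v : NNReal) (x : ℝ) :
    gaussianPDFReal μ v x ≤ (√(2 * π * v))⁻¹ := by
  rw [gaussianPDFReal_def]
  refine mul_le_of_le_one_right (by positivity) (exp_le_one_iff.2 ?_)
  exact div_nonpos_of_nonpos_of_nonneg (neg_nonpos.2 (sq_nonneg _)) (by positivity)

open Real in
theorem gaussianReal_le_mul_volume (μ : ℝ) {v : NNReal} (hv : v ≠ 0) (s : Set ℝ) :
    gaussianReal μ v s ≤ ENNReal.ofReal (√(2 * π * v))⁻¹ * volume s := by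
  rw [gaussianReal_apply μ hv s, ← setLIntegral_const]
  exact lintegral_mono fun x => ENNReal.ofReal_le_ofReal (gaussianPDFReal_le_inv_sqrt μ v x)

open Real in
theorem gaussianReal_real_abs_add_lt_le (μ : ℝ) {v : NNReal} (hv : v ≠ 0) (m : ℝ) {c : ℝ}
    (hc : 0 ≤ c) : (gaussianReal μ v).real {y | |m + y| < c} ≤ 2 * c / √(2 * π * v) := by
  have hIoo : {y : ℝ | |m + y| < c} = Set.Ioo (-c - m) (c - m) := by
    ext y
    simp only [Set.mem_ofPred_eq, Set.mem_Ioo, abs_lt]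
    constructor <;> rintro ⟨h₁, h₂⟩ <;> constructor <;> linarith
  rw [measureReal_def, hIoo]
  refine ENNReal.toReal_le_of_le_ofReal (by positivity)
    ((gaussianReal_le_mul_volume μ hv _).trans_eq ?_)
  rw [Real.volume_Ioo, ← ENNReal.ofReal_mul (by positivity), div_eq_inv_mul]
  ring_nf

theorem integral_indicator_one_sub_measureReal_sq {α : Type*} [MeasurableSpace α]
    {γ : Measure α} [IsProbabilityMeasure γ] {A : Set α} (hA : MeasurableSet A) :
    ∫ y, (A.indicator 1 y - γ.real A) ^ 2 ∂γ = γ.real A * (1 - γ.real A) := by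
  have hsq (y : α) : (A.indicator 1 y - γ.real A) ^ 2
      = A.indicator 1 y * (1 - 2 * γ.real A) + γ.real A ^ 2 := by
    by_cases hy : y ∈ A
    · simp only [hy, Set.indicator_of_mem, Pi.one_apply]
      ring
    · simp [hy]
  simp_rw [hsq]
  rw [integral_add (((integrable_const 1).indicator hA).mul_const _) (integrable_const _),
    integral_mul_const, integral_indicator_one hA, integral_const]
  simp only [probReal_univ, smul_eq_mul, one_mul]
  ring

section NoiseDriven

variable {ι : Type*} [LinearOrder ι]

/-- `f j g` is a state driven by the noise `g`: it does not see later noise, and the noise `g j`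
enters it additively. For the LQR system, `f j g = x_{j+2}` and `g j = w_{j+1}`. -/
structure IsNoiseDriven (f : ι → (ι → ℝ) → ℝ) : Prop where
  measurable : ∀ j, Measurable (f j)
  apply_update_of_lt : ∀ i j g y, i < j → f i (update g j y) = f i g
  apply_eq_apply_update_zero_add : ∀ j g, f j g = f j (update g j 0) + g j

def noiseDrift (f : ι → (ι → ℝ) → ℝ) (j : ι) (g : ι → ℝ) : ℝ := f j (update g j 0)

def smallBallProb (γ : Measure ℝ) (c m : ℝ) : ℝ := γ.real {y | |m + y| < c}

def smallBallExcess (γ : Measure ℝ) (c : ℝ) (f : ι → (ι → ℝ) → ℝ) (j : ι) (g : ι → ℝ) : ℝ :=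
  (if |f j g| < c then 1 else 0) - smallBallProb γ c (noiseDrift f j g)

theorem measurableSet_abs_add_lt (m c : ℝ) : MeasurableSet {y : ℝ | |m + y| < c} :=
  measurableSet_lt (by fun_prop) measurable_const

theorem measurable_smallBallProb (γ : Measure ℝ) [SFinite γ] (c : ℝ) :
    Measurable (smallBallProb γ c) :=
  (measurable_measure_prodMk_left (ν := γ)
    (measurableSet_lt (by fun_prop) measurable_const :
      MeasurableSet {p : ℝ × ℝ | |p.1 + p.2| < c})).ennreal_toReal

theorem smallBallProb_nonneg (γ : Measure ℝ) (c m : ℝ) : 0 ≤ smallBallProb γ c m :=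
  measureReal_nonneg

theorem smallBallProb_le_one (γ : Measure ℝ) [IsProbabilityMeasure γ] (c m : ℝ) :
    smallBallProb γ c m ≤ 1 :=
  measureReal_le_one

namespace IsNoiseDriven

variable {f : ι → (ι → ℝ) → ℝ} (hf : IsNoiseDriven f) (γ : Measure ℝ) (c : ℝ)
include hf

theorem apply_update_self (j : ι) (g : ι → ℝ) (y : ℝ) :
    f j (update g j y) = noiseDrift f j g + y := by
  rw [hf.apply_eq_apply_update_zero_add, update_idem, update_self, noiseDrift]

theorem noiseDrift_update_of_le {i j : ι} (hij : i ≤ j) (g : ι → ℝ) (y : ℝ) :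
    noiseDrift f i (update g j y) = noiseDrift f i g := by
  rcases hij.lt_or_eq with hlt | rfl
  · rw [noiseDrift, update_comm hlt.ne', hf.apply_update_of_lt i j _ _ hlt, noiseDrift]
  · rw [noiseDrift, update_idem, noiseDrift]

theorem measurable_noiseDrift (j : ι) : Measurable (noiseDrift f j) :=
  (hf.measurable j).comp measurable_update_left

theorem measurable_smallBallExcess [SFinite γ] (j : ι) :
    Measurable (smallBallExcess γ c f j) :=
  (Measurable.ite (measurableSet_lt (hf.measurable j).abs measurable_const) measurable_const
    measurable_const).sub ((measurable_smallBallProb γ c).comp (hf.measurable_noiseDrift j))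

omit hf in
theorem abs_smallBallExcess_le [IsProbabilityMeasure γ] (j : ι) (g : ι → ℝ) :
    |smallBallExcess γ c f j g| ≤ 1 := by
  have h₀ := smallBallProb_nonneg γ c (noiseDrift f j g)
  have h₁ := smallBallProb_le_one γ c (noiseDrift f j g)
  rw [smallBallExcess, abs_le]
  split_ifs <;> constructor <;> linarith

theorem smallBallExcess_update_of_lt {i j : ι} (hij : i < j) (g : ι → ℝ) (y : ℝ) :
    smallBallExcess γ c f i (update g j y) = smallBallExcess γ c f i g := by
  rw [smallBallExcess, hf.apply_update_of_lt i j g y hij, hf.noiseDrift_update_of_le hij.le,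
    smallBallExcess]

theorem smallBallExcess_update_self (j : ι) (g : ι → ℝ) (y : ℝ) :
    smallBallExcess γ c f j (update g j y)
      = {y | |noiseDrift f j g + y| < c}.indicator 1 y - γ.real {y | |noiseDrift f j g + y| < c} := by
  rw [smallBallExcess, hf.apply_update_self, hf.noiseDrift_update_of_le le_rfl, smallBallProb]
  simp only [Set.indicator_apply, Set.mem_ofPred_eq, Pi.one_apply]

theorem integral_smallBallExcess_update [IsProbabilityMeasure γ] (j : ι) (g : ι → ℝ) :
    ∫ y, smallBallExcess γ c f j (update g j y) ∂γ = 0 := by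
  simp_rw [hf.smallBallExcess_update_self]
  rw [integral_sub ((integrable_const 1).indicator (measurableSet_abs_add_lt _ c)) (integrable_const _),
    integral_indicator_one (measurableSet_abs_add_lt _ c), integral_const]
  simp

theorem integral_smallBallExcess_update_sq_le [IsProbabilityMeasure γ] (j : ι) (g : ι → ℝ) :
    ∫ y, smallBallExcess γ c f j (update g j y) ^ 2 ∂γ ≤ 1 / 4 := by
  simp_rw [hf.smallBallExcess_update_self]
  rw [integral_indicator_one_sub_measureReal_sq (measurableSet_abs_add_lt _ c)]
  nlinarith [sq_nonneg (γ.real {y | |noiseDrift f j g + y| < c} - 1 / 2)]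

variable [Fintype ι]

theorem memLp_smallBallExcess [IsProbabilityMeasure γ] (j : ι) :
    MemLp (smallBallExcess γ c f j) 2 (Measure.pi fun _ : ι => γ) :=
  MemLp.of_bound (hf.measurable_smallBallExcess γ c j).aestronglyMeasurable 1
    (ae_of_all _ (abs_smallBallExcess_le γ c j))

theorem integral_sq_sum_smallBallExcess_le [IsProbabilityMeasure γ] :
    ∫ g, (∑ j, smallBallExcess γ c f j g) ^ 2 ∂Measure.pi (fun _ : ι => γ)
      ≤ Fintype.card ι / 4 := by
  rw [integral_sq_sum_eq_sum_integral_sq (hf.memLp_smallBallExcess γ c)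
    (fun i j g y hij => hf.smallBallExcess_update_of_lt γ c hij g y)
    (hf.integral_smallBallExcess_update γ c)]
  calc ∑ j, ∫ g, smallBallExcess γ c f j g ^ 2 ∂Measure.pi (fun _ : ι => γ)
      ≤ ∑ _j : ι, (1 / 4 : ℝ) := Finset.sum_le_sum fun j _ => ?_
    _ = Fintype.card ι / 4 := by rw [Finset.sum_const, Finset.card_univ, nsmul_eq_mul]; ring
  rw [integral_eq_integral_integral_update ((hf.memLp_smallBallExcess γ c j).integrable_sq) j]
  refine (integral_mono_of_nonneg (ae_of_all _ fun g => integral_nonneg fun y => sq_nonneg _)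
    (integrable_const (1 / 4 : ℝ)) (ae_of_all _ fun g => ?_)).trans_eq (by simp)
  exact hf.integral_smallBallExcess_update_sq_le γ c j g

theorem measureReal_card_small_ge_le [IsProbabilityMeasure γ] {p θ : ℝ}
    (hp : ∀ m, smallBallProb γ c m ≤ p) (hθ : 0 < θ) :
    (Measure.pi fun _ : ι => γ).real
        {g | p * Fintype.card ι + θ ≤ ∑ j, if |f j g| < c then (1 : ℝ) else 0}
      ≤ Fintype.card ι / (4 * θ ^ 2) := by
  set V : (ι → ℝ) → ℝ := fun g => ∑ j, smallBallExcess γ c f j g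
  have hsub : {g | p * Fintype.card ι + θ ≤ ∑ j, if |f j g| < c then (1 : ℝ) else 0}
      ⊆ {g | θ ^ 2 ≤ V g ^ 2} := by
    intro g hg
    have hsplit : ∑ j, (if |f j g| < c then (1 : ℝ) else 0)
        = V g + ∑ j, smallBallProb γ c (noiseDrift f j g) := by
      simp only [V, smallBallExcess, Finset.sum_sub_distrib, sub_add_cancel]
    have hprob : ∑ j, smallBallProb γ c (noiseDrift f j g) ≤ p * Fintype.card ι :=
      (Finset.sum_le_sum fun j _ => hp _).trans_eq (by simp [mul_comm])
    exact pow_le_pow_left₀ hθ.le (by simp only [Set.mem_ofPred_eq] at hg; linarith) 2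
  have hV : Integrable (fun g => V g ^ 2) (Measure.pi fun _ : ι => γ) :=
    (memLp_finsetSum _ fun j _ => hf.memLp_smallBallExcess γ c j).integrable_sq
  have hmarkov := mul_meas_ge_le_integral_of_nonneg (ae_of_all _ fun g => sq_nonneg (V g)) hV (θ ^ 2)
  calc (Measure.pi fun _ : ι => γ).real
        {g | p * Fintype.card ι + θ ≤ ∑ j, if |f j g| < c then (1 : ℝ) else 0}
      ≤ (Measure.pi fun _ : ι => γ).real {g | θ ^ 2 ≤ V g ^ 2} := measureReal_mono hsub
    _ ≤ Fintype.card ι / 4 / θ ^ 2 := by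
      rw [le_div_iff₀ (by positivity)]
      linarith [hf.integral_sq_sum_smallBallExcess_le γ c]
    _ = Fintype.card ι / (4 * θ ^ 2) := by rw [div_div]

end IsNoiseDriven

end NoiseDriven

section LQR

variable (a b : ℝ) (π : (t : ℕ) → (Fin t → ℝ) → ℝ)

theorem lqrState_congr {t : ℕ} {w w' : ℕ → ℝ} (h : ∀ k < t, w k = w' k) :
    lqrState a b π w t = lqrState a b π w' t := by
  induction t using Nat.strong_induction_on generalizing w w' with
  | _ t ih =>
    match t with
    | 0 => rw [lqrState, lqrState]
    | 1 => rw [lqrState, lqrState]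
    | t + 2 =>
      have hprev (s : ℕ) (hs : s ≤ t + 1) : lqrState a b π w s = lqrState a b π w' s :=
        ih s (by omega) fun k hk => h k (by omega)
      rw [lqrState, lqrState, hprev _ le_rfl, h (t + 1) (by omega)]
      simp only [hprev _ (Nat.succ_le_of_lt (Fin.is_lt _))]

theorem lqrState_eq_update_add (w : ℕ → ℝ) (t : ℕ) :
    lqrState a b π w (t + 2) = lqrState a b π (update w (t + 1) 0) (t + 2) + w (t + 1) := by
  have hprev (s : ℕ) (hs : s ≤ t + 1) :
      lqrState a b π (update w (t + 1) 0) s = lqrState a b π w s :=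
    lqrState_congr a b π fun k hk => update_of_ne (by omega) _ _
  rw [lqrState, lqrState, hprev _ le_rfl, update_self]
  simp only [hprev _ (Nat.succ_le_of_lt (Fin.is_lt _)), add_zero]

theorem measurable_lqrState (hπ : ∀ t, Measurable (π t)) (t : ℕ) :
    Measurable fun w : ℕ → ℝ => lqrState a b π w t := by
  induction t using Nat.strong_induction_on with
  | _ t ih =>
    match t with
    | 0 => simp only [lqrState]; exact measurable_const
    | 1 => simp only [lqrState]; exact measurable_const
    | t + 2 =>
      simp only [lqrState]
      exact ((measurable_const.mul (ih _ (by omega))).add (measurable_const.mul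
        ((hπ _).comp (measurable_pi_lambda _ fun i => ih _ (by omega))))).add
        (measurable_pi_apply _)

theorem noiseSeq_update {T : ℕ} (g : Fin T → ℝ) (j : Fin T) (y : ℝ) :
    noiseSeq (update g j y) = update (noiseSeq g) (j + 1) y := by
  funext k
  by_cases hk : k = j + 1
  · subst hk
    simp [noiseSeq, Nat.succ_le_of_lt j.is_lt]
  · have hne (h : 1 ≤ k ∧ k ≤ T) : (⟨k - 1, by omega⟩ : Fin T) ≠ j := fun e => hk (by
      rw [← e]; simp only; omega)
    simp only [noiseSeq, update_of_ne hk]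
    split_ifs with h
    · exact update_of_ne (hne h) _ _
    · rfl

theorem noiseSeq_succ {T : ℕ} (g : Fin T → ℝ) (j : Fin T) : noiseSeq g (j + 1) = g j := by
  simp [noiseSeq, Nat.succ_le_of_lt j.is_lt]

theorem measurable_noiseSeq {T : ℕ} : Measurable (noiseSeq : (Fin T → ℝ) → ℕ → ℝ) := by
  refine measurable_pi_lambda _ fun k => ?_
  by_cases h : 1 ≤ k ∧ k ≤ T
  · simp only [noiseSeq, dif_pos h]
    exact measurable_pi_apply _
  · simp only [noiseSeq, dif_neg h]
    exact measurable_const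

theorem isNoiseDriven_lqrState (hπ : ∀ t, Measurable (π t)) (T : ℕ) :
    IsNoiseDriven fun (j : Fin T) (g : Fin T → ℝ) => lqrState a b π (noiseSeq g) (j + 2) where
  measurable j := (measurable_lqrState a b π hπ _).comp measurable_noiseSeq
  apply_update_of_lt i j g y hij := by
    rw [noiseSeq_update]
    exact lqrState_congr a b π fun k hk => update_of_ne (by rw [Fin.lt_def] at hij; omega) _ _
  apply_eq_apply_update_zero_add j g := by
    rw [noiseSeq_update, ← noiseSeq_succ g j]
    exact lqrState_eq_update_add a b π _ _

end LQR

theorem sum_Icc_one_add_eq_add_sum_fin {M : Type*} [AddCommMonoid M] (L : ℕ → M) (T : ℕ) :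
    ∑ t ∈ Finset.Icc 1 T, L t + L (T + 1) = L 1 + ∑ j : Fin T, L (j + 2) := by
  induction T with
  | zero => simp
  | succ T ih =>
    rw [Finset.sum_Icc_succ_top (by omega), Fin.sum_univ_castSucc, ih]
    simp only [Fin.val_castSucc, Fin.val_last, add_assoc]

theorem sub_sum_small_le_sum_large (x : ℕ → ℝ) (hx : x 1 = 0) {c : ℝ} (hc : 0 < c) (T : ℕ) :
    T - 1 - ∑ j : Fin T, (if |x (j + 2)| < c then (1 : ℝ) else 0)
      ≤ ∑ t ∈ Finset.Icc 1 T, if c ≤ |x t| then (1 : ℝ) else 0 := by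
  have hsplit := sum_Icc_one_add_eq_add_sum_fin (fun t => if c ≤ |x t| then (1 : ℝ) else 0) T
  have hlast : (if c ≤ |x (T + 1)| then (1 : ℝ) else 0) ≤ 1 := by split_ifs <;> norm_num
  have hcompl (j : Fin T) : (if c ≤ |x (j + 2)| then (1 : ℝ) else 0)
      = 1 - if |x (j + 2)| < c then 1 else 0 := by
    by_cases h : |x (j + 2)| < c
    · simp [h, not_le.2 h]
    · simp [h, not_lt.1 h]
  simp only [hx, abs_zero, not_le.2 hc, if_false, hcompl, Finset.sum_sub_distrib,
    Finset.sum_const, Finset.card_univ, Fintype.card_fin, nsmul_eq_mul, mul_one] at hsplit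
  linarith

theorem le_prod_apply_of_forall_le {α β : Type*} [MeasurableSpace α] [MeasurableSpace β]
    {μ : Measure α} [IsProbabilityMeasure μ] {ν : Measure β} [SFinite ν] {S : Set (α × β)}
    (hS : MeasurableSet S) {c : ENNReal} (h : ∀ x, c ≤ ν (Prod.mk x ⁻¹' S)) :
    c ≤ μ.prod ν S := by
  rw [Measure.prod_apply hS]
  calc c = ∫⁻ _, c ∂μ := by simp
    _ ≤ ∫⁻ x, ν (Prod.mk x ⁻¹' S) ∂μ := lintegral_mono h

theorem smallBallProb_gaussianReal_le {σ : ℝ} (hσ : 0 < σ) (m : ℝ) :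
    smallBallProb (gaussianReal 0 (σ ^ 2).toNNReal) (2 * σ / 5) m ≤ 8 / 25 := by
  have hv : (σ ^ 2).toNNReal ≠ 0 := by simpa using hσ.ne'
  refine (gaussianReal_real_abs_add_lt_le 0 hv m (by positivity)).trans ?_
  rw [Real.coe_toNNReal _ (sq_nonneg σ), div_le_iff₀ (by positivity)]
  have hsqrt : 5 * σ / 2 ≤ √(2 * Real.pi * σ ^ 2) :=
    Real.le_sqrt_of_sq_le (by nlinarith [Real.pi_gt_d2, sq_nonneg σ])
  linarith

theorem measure_many_large_lqrStates {σ : ℝ} (hσ : 0 < σ) {T : ℕ} (hT : 12000 ≤ T) (a b : ℝ)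
    (π : (t : ℕ) → (Fin t → ℝ) → ℝ) (hπ : ∀ t, Measurable (π t)) :
    (7 : ENNReal) / 8 ≤ Measure.pi (fun _ : Fin T => gaussianReal 0 (σ ^ 2).toNNReal)
      {g | (2 / 3 : ℝ) * T ≤
        ∑ t ∈ Finset.Icc 1 T, if 2 * σ / 5 ≤ |lqrState a b π (noiseSeq g) t| then (1 : ℝ) else 0} := by
  set P := Measure.pi (fun _ : Fin T => gaussianReal 0 (σ ^ 2).toNNReal)
  set G := {g | (2 / 3 : ℝ) * T ≤
    ∑ t ∈ Finset.Icc 1 T, if 2 * σ / 5 ≤ |lqrState a b π (noiseSeq g) t| then (1 : ℝ) else 0}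
  have hT' : (12000 : ℝ) ≤ T := by exact_mod_cast hT
  -- Only `8/25` of the states can be expected to be small; the slack `T/75 - 1` absorbs
  -- the fluctuations and the states `x_1 = 0` and `x_{T+1}`.
  have hbad := (isNoiseDriven_lqrState a b π hπ T).measureReal_card_small_ge_le
    (gaussianReal 0 (σ ^ 2).toNNReal) (2 * σ / 5) (smallBallProb_gaussianReal_le hσ)
    (θ := T / 75 - 1) (by linarith)
  have hsub : Gᶜ ⊆ {g | 8 / 25 * Fintype.card (Fin T) + (T / 75 - 1) ≤
      ∑ j : Fin T, if |lqrState a b π (noiseSeq g) (j + 2)| < 2 * σ / 5 then (1 : ℝ) else 0} := by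
    intro g hg
    have hcount := sub_sum_small_le_sum_large (fun t => lqrState a b π (noiseSeq g) t)
      (by rw [lqrState]) (by positivity : 0 < 2 * σ / 5) T
    simp only [G, Set.mem_compl_iff, Set.mem_ofPred_eq, not_le] at hg
    simp only [Set.mem_ofPred_eq, Fintype.card_fin]
    linarith
  have hPbad : P.real Gᶜ ≤ 1 / 8 := by
    refine (measureReal_mono hsub).trans (hbad.trans ?_)
    rw [Fintype.card_fin, div_le_div_iff₀ (by nlinarith) (by norm_num)]
    nlinarith
  have hPG : 7 / 8 ≤ P.real G := by
    have := measureReal_union_le (μ := P) G Gᶜ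
    rw [Set.union_compl_self, probReal_univ] at this
    linarith
  rw [show (7 : ENNReal) / 8 = ENNReal.ofReal (7 / 8) by
    rw [ENNReal.ofReal_div_of_pos (by norm_num)]; simp]
  exact (ENNReal.ofReal_le_iff_le_toReal (measure_ne_top P G)).2 hPG

-- The anonymous constructor in `lqrMeasure` has type `{r : ℝ // 0 ≤ r}`, which instance search
-- does not unfold to `ℝ≥0`; restating the variance as `(σ ^ 2).toNNReal` makes the Gaussian
-- instances available.
theorem lqrMeasure_eq_prod (σ : ℝ) (T : ℕ) :
    lqrMeasure σ T = (PMF.uniformOfFintype Bool).toMeasure.prod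
      (Measure.pi fun _ : Fin T => gaussianReal 0 (σ ^ 2).toNNReal) := by
  rw [lqrMeasure, show (⟨σ ^ 2, sq_nonneg σ⟩ : {r : ℝ // 0 ≤ r}) = (σ ^ 2).toNNReal from
    Subtype.ext (Real.coe_toNNReal _ (sq_nonneg σ)).symm]

theorem measurable_X (a ε : ℝ) (π : (t : ℕ) → (Fin t → ℝ) → ℝ) (hπ : ∀ t, Measurable (π t))
    (T t : ℕ) : Measurable fun ω : Bool × (Fin T → ℝ) => X a ε π ω t :=
  measurable_from_prod_countable_right fun s =>
    (measurable_lqrState a (signVal s * Real.sqrt ε) π hπ t).comp measurable_noiseSeq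

theorem many_large_states_general (σ : ℝ) (hσ : 0 < σ) (T : ℕ) (hT : 12000 ≤ T)
    (ε a : ℝ)
    (π : (t : ℕ) → (Fin t → ℝ) → ℝ) (hπ : ∀ t, Measurable (π t)) :
    (7 : ENNReal) / 8 ≤
      lqrMeasure σ T
        {ω : Bool × (Fin T → ℝ) |
          (2 / 3 : ℝ) * T ≤
            ∑ t ∈ Finset.Icc 1 T,
              (if 2 * σ / 5 ≤ |X a ε π ω t| then (1 : ℝ) else 0)} := by
  have hS : MeasurableSet {ω : Bool × (Fin T → ℝ) | (2 / 3 : ℝ) * T ≤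
      ∑ t ∈ Finset.Icc 1 T, (if 2 * σ / 5 ≤ |X a ε π ω t| then (1 : ℝ) else 0)} :=
    measurableSet_le measurable_const (Finset.measurable_sum _ fun t _ =>
      Measurable.ite (measurableSet_le measurable_const (measurable_X a ε π hπ T t).abs)
        measurable_const measurable_const)
  rw [lqrMeasure_eq_prod]
  exact le_prod_apply_of_forall_le hS fun s =>
    measure_many_large_lqrStates hσ hT a (signVal s * Real.sqrt ε) π hπ

/-- **Lemma (most states are large).**
In the one-dimensional LQR lower-bound setting with `T ≥ 12000`, for any
deterministic learning algorithm, with probability at least `7/8` at least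
`(2/3)T` of the states `x_1, …, x_T` satisfy `|x_t| ≥ 2σ/5`. -/
theorem many_large_states (σ : ℝ) (hσ : 0 < σ) (T : ℕ) (hT : 12000 ≤ T)
    (ε a : ℝ)
    (hε0 : 0 < ε) (hε1 : ε ≤ 1 / 400)
    (ha : a = 1 / Real.sqrt 5)
    (π : (t : ℕ) → (Fin t → ℝ) → ℝ) (hπ : ∀ t, Measurable (π t)) :
    (7 : ENNReal) / 8 ≤
      lqrMeasure σ T
        {ω : Bool × (Fin T → ℝ) |
          (2 / 3 : ℝ) * T ≤
            ∑ t ∈ Finset.Icc 1 T,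
              (if 2 * σ / 5 ≤ |X a ε π ω t| then (1 : ℝ) else 0)} :=
  many_large_states_general σ hσ T hT ε a π hπ

end LQRLowerBound
end

section
/- Let w_1, …, w_T be i.i.d. random vectors in ℝ^d, each distributed as a centered Gaussian with covariance σ²I, and suppose T > 2. Then E[max_{1 ≤ t ≤ T} ‖w_t‖²] ≤ 5σ²d log(3T), where ‖·‖ is the Euclidean norm. -/
/-!
With `c = 1 / (3σ²)`, each coordinate satisfies `E[exp (c x²)] = (1 - 2cσ²)^(-1/2) = √3`, so
`E[exp (c ‖w_t‖²)] = √3 ^ d`. Bounding `exp (c · max_t ‖w_t‖²)` by `∑_t exp (c ‖w_t‖²)` and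
applying Jensen's inequality to `exp` gives `c · E[max_t ‖w_t‖²] ≤ log (T · √3 ^ d)`, that is
`E[max_t ‖w_t‖²] ≤ 3σ² (log T + (d / 2) log 3) ≤ 5σ² d log (3T)`.
-/

open MeasureTheory ProbabilityTheory Real
open scoped NNReal

section MaximalInequality

variable {Ω ι : Type*} [MeasurableSpace Ω] {μ : Measure Ω} [Fintype ι] [Nonempty ι]
  {X : ι → Ω → ℝ}

lemma abs_ciSup_le_sum_abs (f : ι → ℝ) : |⨆ t, f t| ≤ ∑ t, |f t| := by
  obtain ⟨t₀, ht₀⟩ := exists_eq_ciSup_of_finite (f := f)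
  rw [← ht₀]
  exact Finset.single_le_sum (fun t _ => abs_nonneg (f t)) (Finset.mem_univ t₀)

lemma exp_ciSup_le_sum_exp (f : ι → ℝ) : exp (⨆ t, f t) ≤ ∑ t, exp (f t) := by
  obtain ⟨t₀, ht₀⟩ := exists_eq_ciSup_of_finite (f := f)
  rw [← ht₀]
  exact Finset.single_le_sum (fun t _ => (exp_pos (f t)).le) (Finset.mem_univ t₀)

lemma integrable_ciSup (hX : ∀ t, Integrable (X t) μ) :
    Integrable (fun ω => ⨆ t, X t ω) μ :=
  (integrable_finsetSum _ fun t _ => (hX t).abs).mono'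
    (AEMeasurable.iSup fun t => (hX t).aemeasurable).aestronglyMeasurable
    (ae_of_all _ fun ω => by simpa only [norm_eq_abs] using abs_ciSup_le_sum_abs (X · ω))

lemma integral_le_log_integral_exp [IsProbabilityMeasure μ] {f : Ω → ℝ} (hf : Integrable f μ)
    (hexp : Integrable (fun ω => exp (f ω)) μ) :
    ∫ ω, f ω ∂μ ≤ log (∫ ω, exp (f ω) ∂μ) := by
  rw [le_log_iff_exp_le (integral_exp_pos hexp)]
  exact convexOn_exp.map_integral_le continuousOn_exp isClosed_univ
    (ae_of_all _ fun _ => Set.mem_univ _) hf hexp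

theorem integral_ciSup_le_log_card_mul_div [IsProbabilityMeasure μ] {c M : ℝ} (hc : 0 < c)
    (hX : ∀ t, Integrable (X t) μ) (hexp : ∀ t, Integrable (fun ω => exp (c * X t ω)) μ)
    (hM : ∀ t, ∫ ω, exp (c * X t ω) ∂μ ≤ M) :
    ∫ ω, ⨆ t, X t ω ∂μ ≤ log (Fintype.card ι * M) / c := by
  have hsum : Integrable (fun ω => ∑ t, exp (c * X t ω)) μ :=
    integrable_finsetSum _ fun t _ => hexp t
  have hexp_le : ∀ ω, exp (c * ⨆ t, X t ω) ≤ ∑ t, exp (c * X t ω) := fun ω => by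
    rw [mul_iSup_of_nonneg hc.le]
    exact exp_ciSup_le_sum_exp _
  have hexp_sup : Integrable (fun ω => exp (c * ⨆ t, X t ω)) μ :=
    hsum.mono'
      ((AEMeasurable.iSup fun t => (hX t).aemeasurable).const_mul c).exp.aestronglyMeasurable
      (ae_of_all _ fun ω => by rw [norm_of_nonneg (exp_pos _).le]; exact hexp_le ω)
  have hint_le : ∫ ω, exp (c * ⨆ t, X t ω) ∂μ ≤ Fintype.card ι * M := by
    calc ∫ ω, exp (c * ⨆ t, X t ω) ∂μ
        ≤ ∫ ω, ∑ t, exp (c * X t ω) ∂μ := integral_mono hexp_sup hsum hexp_le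
      _ = ∑ t, ∫ ω, exp (c * X t ω) ∂μ := integral_finsetSum _ fun t _ => hexp t
      _ ≤ ∑ _t : ι, M := Finset.sum_le_sum fun t _ => hM t
      _ = Fintype.card ι * M := by rw [Finset.sum_const, Finset.card_univ, nsmul_eq_mul]
  rw [le_div_iff₀ hc, mul_comm, ← integral_const_mul]
  calc ∫ ω, c * ⨆ t, X t ω ∂μ
      ≤ log (∫ ω, exp (c * ⨆ t, X t ω) ∂μ) :=
        integral_le_log_integral_exp ((integrable_ciSup hX).const_mul c) hexp_sup
    _ ≤ log (Fintype.card ι * M) := log_le_log (integral_exp_pos hexp_sup) hint_le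

end MaximalInequality

section Gaussian

variable {v : ℝ≥0} {c : ℝ}

lemma gaussianPDFReal_zero_mul_exp_mul_sq (c x : ℝ) :
    gaussianPDFReal 0 v x * exp (c * x ^ 2)
      = (√(2 * π * v))⁻¹ * exp (-((2 * (v : ℝ))⁻¹ - c) * x ^ 2) := by
  rw [gaussianPDFReal, mul_assoc, ← exp_add]
  congr 2
  ring

lemma integrable_exp_mul_sq_gaussianReal (hv : v ≠ 0) (hc : 2 * c * v < 1) :
    Integrable (fun x => exp (c * x ^ 2)) (gaussianReal 0 v) := by
  have hb : 0 < (2 * (v : ℝ))⁻¹ - c := by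
    have : (0 : ℝ) < v := by positivity
    rw [sub_pos, ← one_div, lt_div_iff₀ (by positivity)]
    linarith
  rw [gaussianReal_of_var_ne_zero 0 hv, integrable_withDensity_iff_integrable_smul'
    (measurable_gaussianPDF 0 v) (ae_of_all _ fun _ => gaussianPDF_lt_top)]
  simp_rw [toReal_gaussianPDF, smul_eq_mul, gaussianPDFReal_zero_mul_exp_mul_sq]
  exact (integrable_exp_neg_mul_sq hb).const_mul _

lemma integral_exp_mul_sq_gaussianReal (hv : v ≠ 0) (hc : 2 * c * v < 1) :
    ∫ x, exp (c * x ^ 2) ∂gaussianReal 0 v = (√(1 - 2 * c * v))⁻¹ := by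
  rw [integral_gaussianReal_eq_integral_smul hv]
  simp_rw [smul_eq_mul, gaussianPDFReal_zero_mul_exp_mul_sq, integral_const_mul, integral_gaussian]
  have h1 : 0 < 1 - 2 * c * v := by linarith
  have h2 : π / ((2 * (v : ℝ))⁻¹ - c) = 2 * π * v / (1 - 2 * c * v) := by
    field_simp
  rw [h2, sqrt_div' _ h1.le]
  field_simp

variable {ι : Type*} [Fintype ι]

lemma integrable_sum_sq_pi_gaussianReal (m : ℝ) (v : ℝ≥0) :
    Integrable (fun x : ι → ℝ => ∑ i, x i ^ 2) (Measure.pi fun _ => gaussianReal m v) :=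
  integrable_finsetSum _ fun _ _ =>
    integrable_comp_eval (f := fun y => y ^ 2) (memLp_id_gaussianReal 2).integrable_sq

lemma integrable_exp_mul_sum_sq_pi_gaussianReal (hv : v ≠ 0) (hc : 2 * c * v < 1) :
    Integrable (fun x : ι → ℝ => exp (c * ∑ i, x i ^ 2))
      (Measure.pi fun _ => gaussianReal 0 v) := by
  simp_rw [Finset.mul_sum, exp_sum]
  exact Integrable.fintype_prod fun _ => integrable_exp_mul_sq_gaussianReal hv hc

lemma integral_exp_mul_sum_sq_pi_gaussianReal (hv : v ≠ 0) (hc : 2 * c * v < 1) :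
    ∫ x : ι → ℝ, exp (c * ∑ i, x i ^ 2) ∂Measure.pi (fun _ => gaussianReal 0 v)
      = (√(1 - 2 * c * v))⁻¹ ^ Fintype.card ι := by
  simp_rw [Finset.mul_sum, exp_sum]
  rw [integral_fintype_prod_eq_pow (fun x => exp (c * x ^ 2)),
    integral_exp_mul_sq_gaussianReal hv hc]

end Gaussian

lemma three_mul_log_mul_sqrt_three_pow_le {d T : ℕ} (hd : 1 ≤ d) (hT : 1 ≤ T) :
    3 * log (T * √3 ^ d) ≤ 5 * d * log (3 * T) := by
  have hT' : (1 : ℝ) ≤ T := by exact_mod_cast hT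
  have hd' : (1 : ℝ) ≤ d := by exact_mod_cast hd
  have hlogT : log T ≤ log (3 * T) := log_le_log (by positivity) (by linarith)
  have hlog3 : log 3 ≤ log (3 * T) := log_le_log (by norm_num) (by linarith)
  have hL : 0 ≤ log (3 * T) := log_nonneg (by linarith)
  rw [log_mul (by positivity) (by positivity), log_pow, log_sqrt (by norm_num)]
  nlinarith [mul_le_mul_of_nonneg_left hlog3 (by positivity : (0 : ℝ) ≤ d),
    mul_le_mul_of_nonneg_right hd' hL]

/-- **Lemma (expected maximal squared norm of Gaussian vectors).**
Let `w_1, …, w_T` be i.i.d. random vectors in `ℝ^d`, each a centered Gaussian with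
covariance `σ²I`, and suppose `T > 2`.  Then
`E[max_{1 ≤ t ≤ T} ‖w_t‖²] ≤ 5σ²d·log(3T)` (Euclidean norm). -/
theorem expected_max_gaussian_sq_norm (σ : ℝ) (hσ : 0 < σ) (d T : ℕ) (hd : 0 < d)
    (hT : 2 < T) :
    ∫ w : Fin T → Fin d → ℝ, (⨆ t : Fin T, ∑ i, w t i ^ 2)
        ∂(Measure.pi fun _ : Fin T =>
            (Measure.pi fun _ : Fin d => gaussianReal 0 ⟨σ ^ 2, sq_nonneg σ⟩))
      ≤ 5 * σ ^ 2 * d * Real.log (3 * T) := by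
  set v : ℝ≥0 := ⟨σ ^ 2, sq_nonneg σ⟩
  set c : ℝ := (3 * σ ^ 2)⁻¹
  have hv : v ≠ 0 := ne_of_gt (show (0 : ℝ) < σ ^ 2 by positivity)
  have hcv : 2 * c * v = 2 / 3 := by
    change 2 * (3 * σ ^ 2)⁻¹ * σ ^ 2 = 2 / 3
    field_simp
  have hc : 2 * c * v < 1 := by rw [hcv]; norm_num
  have hc0 : 0 < c := by positivity
  have : Nonempty (Fin T) := ⟨⟨0, by omega⟩⟩
  set ν : Measure (Fin d → ℝ) := Measure.pi fun _ => gaussianReal 0 v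
  have hX (t : Fin T) := integrable_comp_eval (i := t) (μ := fun _ => ν)
    (f := fun x => ∑ i, x i ^ 2) (integrable_sum_sq_pi_gaussianReal 0 v)
  have hexp (t : Fin T) := integrable_comp_eval (i := t) (μ := fun _ => ν)
    (f := fun x => exp (c * ∑ i, x i ^ 2)) (integrable_exp_mul_sum_sq_pi_gaussianReal hv hc)
  have hM (t : Fin T) := (integral_comp_eval (i := t) (μ := fun _ => ν)
    (integrable_exp_mul_sum_sq_pi_gaussianReal hv hc).aestronglyMeasurable).trans
    (integral_exp_mul_sum_sq_pi_gaussianReal hv hc)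
  rw [hcv, Fintype.card_fin, show (1 : ℝ) - 2 / 3 = 3⁻¹ by norm_num, sqrt_inv, inv_inv] at hM
  refine (integral_ciSup_le_log_card_mul_div hc0 hX hexp fun t => (hM t).le).trans ?_
  rw [Fintype.card_fin, div_eq_mul_inv, inv_inv]
  have key := mul_le_mul_of_nonneg_left
    (three_mul_log_mul_sqrt_three_pow_le hd (by omega : 1 ≤ T)) (sq_nonneg σ)
  linarith
end

section
/- Let w_1, …, w_T be i.i.d. random vectors in ℝ^d, each distributed as a centered Gaussian with covariance σ²I, suppose T > 2, and let E be any event with probability P(E) ≤ δ for some δ ∈ (0,1]. Then E[1_E · max_{1 ≤ t ≤ T} ‖w_t‖²] ≤ 5σ²d δ log(3T/δ), where ‖·‖ is the Euclidean norm and 1_E is the indicator of E. -/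
open MeasureTheory ProbabilityTheory Real Finset
open scoped NNReal ENNReal

/-!
Hölder's inequality with exponents `P` and `P / (P - 1)` gives
`E[1_E M] ≤ P(E) ^ (1 - 1/P) · E[M ^ P] ^ (1/P)` for `M = max_t ‖w_t‖²`. Bounding the maximum by
the sum over `t`, the power mean inequality and the Gaussian moments
`E[x ^ (2P)] = (2P - 1)‼ σ ^ (2P) ≤ (σ² P) ^ P` give `E[M ^ P] ≤ T (σ² d P) ^ P`, hence
`E[1_E M] ≤ δ (T/δ) ^ (1/P) σ² d P`. The choice `P = ⌈log (T/δ)⌉` makes `(T/δ) ^ (1/P) ≤ e`.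
-/

lemma integrable_pow_mul_exp_neg_mul_sq {b : ℝ} (hb : 0 < b) (n : ℕ) :
    Integrable fun x : ℝ => x ^ n * exp (-b * x ^ 2) := by
  simpa only [rpow_natCast] using
    integrable_rpow_mul_exp_neg_mul_sq hb (s := n) (by linarith [n.cast_nonneg (α := ℝ)])

lemma integral_pow_add_two_mul_exp_neg_mul_sq {b : ℝ} (hb : 0 < b) (n : ℕ) :
    ∫ x : ℝ, x ^ (n + 2) * exp (-b * x ^ 2)
      = (n + 1) / (2 * b) * ∫ x : ℝ, x ^ n * exp (-b * x ^ 2) := by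
  have hI := integrable_pow_mul_exp_neg_mul_sq hb
  have hderiv : ∀ x : ℝ, HasDerivAt (fun x => x ^ (n + 1) * exp (-b * x ^ 2))
      ((n + 1) * (x ^ n * exp (-b * x ^ 2)) - 2 * b * (x ^ (n + 2) * exp (-b * x ^ 2))) x := by
    intro x
    refine ((hasDerivAt_pow (n + 1) x).fun_mul
      ((hasDerivAt_pow 2 x).const_mul (-b)).exp).congr_deriv ?_
    push_cast
    ring
  have hzero := integral_eq_zero_of_hasDerivAt_of_integrable hderiv
    (((hI n).const_mul _).sub ((hI (n + 2)).const_mul _)) (hI (n + 1))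
  rw [integral_sub ((hI n).const_mul _) ((hI (n + 2)).const_mul _), integral_const_mul,
    integral_const_mul, sub_eq_zero] at hzero
  rw [div_mul_eq_mul_div, eq_div_iff (by positivity)]
  linarith

lemma integral_pow_two_mul_gaussianReal (v : ℝ≥0) (p : ℕ) :
    ∫ x, x ^ (2 * p) ∂gaussianReal 0 v = (v : ℝ) ^ p * ∏ k ∈ range p, (2 * (k : ℝ) + 1) := by
  rcases eq_or_ne v 0 with rfl | hv
  · cases p <;> simp [gaussianReal_zero_var]
  have hb : (0 : ℝ) < (2 * (v : ℝ))⁻¹ := by positivity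
  have hmoment : ∀ n : ℕ, ∫ x, x ^ n ∂gaussianReal 0 v
      = (√(2 * π * v))⁻¹ * ∫ x : ℝ, x ^ n * exp (-(2 * (v : ℝ))⁻¹ * x ^ 2) := by
    intro n
    rw [integral_gaussianReal_eq_integral_smul hv, ← integral_const_mul]
    congr 1 with x
    rw [gaussianPDFReal, smul_eq_mul]
    ring_nf
  induction p with
  | zero => simp
  | succ p ih =>
    rw [mul_add, mul_one, hmoment, integral_pow_add_two_mul_exp_neg_mul_sq hb, ← mul_assoc,
      mul_comm (√(2 * π * v))⁻¹, mul_assoc, ← hmoment, ih, prod_range_succ]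
    push_cast
    field_simp
    ring

/-- Pair the factors `2k + 1` and `2(p - 1 - k) + 1`, whose product is at most `p ^ 2`. -/
lemma prod_range_two_mul_add_one_le_pow (p : ℕ) :
    ∏ k ∈ range p, (2 * (k : ℝ) + 1) ≤ (p : ℝ) ^ p := by
  have hpair : ∀ k ∈ range p,
      (2 * (k : ℝ) + 1) * (2 * ((p - 1 - k : ℕ) : ℝ) + 1) ≤ (p : ℝ) ^ 2 := by
    intro k hk
    have hk : k + 1 ≤ p := mem_range.mp hk
    rw [Nat.cast_sub (by omega), Nat.cast_sub (by omega)]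
    push_cast
    nlinarith [sq_nonneg ((p : ℝ) - 2 * k - 1)]
  have hsq : (∏ k ∈ range p, (2 * (k : ℝ) + 1)) ^ 2 ≤ ((p : ℝ) ^ p) ^ 2 := by
    calc (∏ k ∈ range p, (2 * (k : ℝ) + 1)) ^ 2
        = ∏ k ∈ range p, (2 * (k : ℝ) + 1) * (2 * ((p - 1 - k : ℕ) : ℝ) + 1) := by
          rw [prod_mul_distrib, prod_range_reflect (fun k => 2 * (k : ℝ) + 1), sq]
      _ ≤ ∏ _k ∈ range p, (p : ℝ) ^ 2 :=
          prod_le_prod (fun k _ => by positivity) hpair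
      _ = ((p : ℝ) ^ p) ^ 2 := by rw [prod_const, card_range, ← pow_mul, ← pow_mul, mul_comm]
  exact (pow_le_pow_iff_left₀ (prod_nonneg fun k _ => by positivity) (by positivity)
    two_ne_zero).mp hsq

lemma lintegral_pow_two_mul_gaussianReal_le (v : ℝ≥0) (p : ℕ) :
    ∫⁻ x, ENNReal.ofReal (x ^ (2 * p)) ∂gaussianReal 0 v ≤ ENNReal.ofReal ((v * p) ^ p) := by
  have hint : Integrable (fun x : ℝ => x ^ (2 * p)) (gaussianReal 0 v) := by
    simpa [Real.norm_eq_abs, (even_two_mul p).pow_abs] using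
      (memLp_id_gaussianReal' (μ := 0) (v := v) (2 * p : ℕ)
        (ENNReal.natCast_ne_top _)).integrable_norm_pow'
  rw [← ofReal_integral_eq_lintegral_ofReal hint
    (ae_of_all _ fun x => (even_two_mul p).pow_nonneg x), integral_pow_two_mul_gaussianReal,
    mul_pow]
  gcongr
  exact prod_range_two_mul_add_one_le_pow p

lemma lintegral_sum_sq_pow_le {ι : Type*} [Fintype ι] (ν : Measure ℝ) [IsProbabilityMeasure ν]
    (p : ℕ) :
    ∫⁻ y : ι → ℝ, ENNReal.ofReal ((∑ i, y i ^ 2) ^ p) ∂Measure.pi (fun _ => ν)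
      ≤ Fintype.card ι ^ p * ∫⁻ x, ENNReal.ofReal (x ^ (2 * p)) ∂ν := by
  obtain _ | p := p
  · simp
  have hjensen : ∀ y : ι → ℝ, (∑ i, y i ^ 2) ^ (p + 1)
      ≤ (Fintype.card ι : ℝ) ^ p * ∑ i, y i ^ (2 * (p + 1)) := fun y => by
    simpa only [← pow_mul, card_univ] using
      pow_sum_le_card_mul_sum_pow (s := univ) (f := fun i => y i ^ 2) (fun i _ => sq_nonneg _) p
  calc ∫⁻ y : ι → ℝ, ENNReal.ofReal ((∑ i, y i ^ 2) ^ (p + 1)) ∂Measure.pi (fun _ => ν)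
      ≤ ∫⁻ y : ι → ℝ, ENNReal.ofReal ((Fintype.card ι : ℝ) ^ p)
          * ∑ i, ENNReal.ofReal (y i ^ (2 * (p + 1))) ∂Measure.pi (fun _ => ν) := by
        refine lintegral_mono fun y => (ENNReal.ofReal_le_ofReal (hjensen y)).trans_eq ?_
        rw [ENNReal.ofReal_mul (by positivity),
          ENNReal.ofReal_sum_of_nonneg fun i _ => (even_two_mul _).pow_nonneg _]
    _ = Fintype.card ι ^ p * ∑ i : ι, ∫⁻ x, ENNReal.ofReal (x ^ (2 * (p + 1))) ∂ν := by
        rw [lintegral_const_mul _ (by fun_prop), lintegral_finsetSum _ fun i _ => by fun_prop,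
          ENNReal.ofReal_pow (Nat.cast_nonneg _), ENNReal.ofReal_natCast]
        congr 1
        refine sum_congr rfl fun i _ => ?_
        exact (measurePreserving_eval (fun _ => ν) i).lintegral_comp
          (f := fun x => ENNReal.ofReal (x ^ (2 * (p + 1)))) (by fun_prop)
    _ ≤ Fintype.card ι ^ (p + 1) * ∫⁻ x, ENNReal.ofReal (x ^ (2 * (p + 1))) ∂ν := by
        rw [sum_const, card_univ, nsmul_eq_mul, ← mul_assoc, pow_succ]

lemma lintegral_ofReal_iSup_pow_le {ι α : Type*} [Fintype ι] [Nonempty ι] [MeasurableSpace α]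
    (μ : Measure α) [IsProbabilityMeasure μ] {g : α → ℝ} (hg : Measurable g) (hg0 : 0 ≤ g)
    (p : ℕ) :
    ∫⁻ w : ι → α, ENNReal.ofReal (⨆ t, g (w t)) ^ p ∂Measure.pi (fun _ => μ)
      ≤ Fintype.card ι * ∫⁻ x, ENNReal.ofReal (g x ^ p) ∂μ := by
  have hmax : ∀ w : ι → α,
      ENNReal.ofReal (⨆ t, g (w t)) ^ p ≤ ∑ t, ENNReal.ofReal (g (w t) ^ p) := by
    intro w
    obtain ⟨t₀, ht₀⟩ := Finite.exists_max fun t => g (w t)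
    have hsup : ⨆ t, g (w t) = g (w t₀) :=
      le_antisymm (ciSup_le ht₀) (le_ciSup (f := fun t => g (w t)) (Finite.bddAbove_range _) t₀)
    rw [hsup, ← ENNReal.ofReal_pow (hg0 _)]
    exact single_le_sum (f := fun t => ENNReal.ofReal (g (w t) ^ p)) (fun t _ => zero_le)
      (mem_univ t₀)
  calc ∫⁻ w : ι → α, ENNReal.ofReal (⨆ t, g (w t)) ^ p ∂Measure.pi (fun _ => μ)
      ≤ ∑ t, ∫⁻ w : ι → α, ENNReal.ofReal (g (w t) ^ p) ∂Measure.pi (fun _ => μ) := by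
        rw [← lintegral_finsetSum _ fun t _ => by fun_prop]
        exact lintegral_mono hmax
    _ = Fintype.card ι * ∫⁻ x, ENNReal.ofReal (g x ^ p) ∂μ := by
        simp_rw [(measurePreserving_eval (fun _ => μ) _).lintegral_comp
          (f := fun x => ENNReal.ofReal (g x ^ p)) (by fun_prop)]
        rw [sum_const, card_univ, nsmul_eq_mul]

lemma lintegral_ofReal_iSup_sum_sq_pow_le {ι κ : Type*} [Fintype ι] [Nonempty ι] [Fintype κ]
    (v : ℝ≥0) (p : ℕ) :
    ∫⁻ w : ι → κ → ℝ, ENNReal.ofReal (⨆ t, ∑ i, w t i ^ 2) ^ p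
        ∂Measure.pi (fun _ => Measure.pi fun _ => gaussianReal 0 v)
      ≤ ENNReal.ofReal (Fintype.card ι * (v * Fintype.card κ * p) ^ p) := by
  calc _ ≤ Fintype.card ι * ∫⁻ y : κ → ℝ, ENNReal.ofReal ((∑ i, y i ^ 2) ^ p)
          ∂Measure.pi fun _ => gaussianReal 0 v :=
        lintegral_ofReal_iSup_pow_le _
          (Finset.measurable_sum _ fun i _ => (measurable_pi_apply i).pow_const 2)
          (fun y => sum_nonneg fun i _ => sq_nonneg _) p
    _ ≤ Fintype.card ι * (Fintype.card κ ^ p * ENNReal.ofReal ((v * p) ^ p)) := by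
        grw [lintegral_sum_sq_pow_le, lintegral_pow_two_mul_gaussianReal_le]
    _ = ENNReal.ofReal (Fintype.card ι * (v * Fintype.card κ * p) ^ p) := by
        rw [← ENNReal.ofReal_natCast, ← ENNReal.ofReal_natCast (Fintype.card κ),
          ← ENNReal.ofReal_pow (by positivity), ← ENNReal.ofReal_mul (by positivity),
          ← ENNReal.ofReal_mul (by positivity)]
        ring_nf

lemma setLIntegral_le_measure_rpow_mul_lintegral_rpow {α : Type*} [MeasurableSpace α]
    (μ : Measure α) {s : Set α} (hs : MeasurableSet s) {f : α → ℝ≥0∞} (hf : AEMeasurable f μ)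
    {p : ℝ} (hp : 1 < p) :
    ∫⁻ x in s, f x ∂μ ≤ μ s ^ (1 - p⁻¹) * (∫⁻ x, f x ^ p ∂μ) ^ p⁻¹ := by
  have hpq := Real.HolderConjugate.conjExponent hp
  have hind : ∫⁻ x, s.indicator (fun _ => (1 : ℝ≥0∞)) x ^ p.conjExponent ∂μ = μ s := by
    rw [← lintegral_indicator_one hs]
    congr 1 with x
    by_cases hx : x ∈ s <;> simp [hx, ENNReal.zero_rpow_of_pos hpq.symm.pos]
  calc ∫⁻ x in s, f x ∂μ = ∫⁻ x, (s.indicator (fun _ => (1 : ℝ≥0∞)) * f) x ∂μ := by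
        rw [← lintegral_indicator hs]
        congr 1 with x
        by_cases hx : x ∈ s <;> simp [hx]
    _ ≤ μ s ^ (1 - p⁻¹) * (∫⁻ x, f x ^ p ∂μ) ^ p⁻¹ := by
        refine (ENNReal.lintegral_mul_le_Lp_mul_Lq μ hpq.symm
          (aemeasurable_one.indicator hs) hf).trans_eq ?_
        rw [hind, hpq.one_sub_inv, one_div, one_div]

lemma setLIntegral_le_ofReal_rpow_mul_rpow {α : Type*} [MeasurableSpace α] {μ : Measure α}
    {s : Set α} (hs : MeasurableSet s) {f : α → ℝ≥0∞} (hf : AEMeasurable f μ) {p δ M : ℝ}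
    (hp : 1 < p) (hδ : 0 ≤ δ) (hM : 0 ≤ M) (hμs : μ s ≤ ENNReal.ofReal δ)
    (hfp : ∫⁻ x, f x ^ p ∂μ ≤ ENNReal.ofReal M) :
    ∫⁻ x in s, f x ∂μ ≤ ENNReal.ofReal (δ ^ (1 - p⁻¹) * M ^ p⁻¹) := by
  have hp₀ : 0 < p⁻¹ := inv_pos.2 (zero_lt_one.trans hp)
  have hq₀ : 0 ≤ 1 - p⁻¹ := sub_nonneg.2 (inv_le_one_of_one_le₀ hp.le)
  calc ∫⁻ x in s, f x ∂μ ≤ μ s ^ (1 - p⁻¹) * (∫⁻ x, f x ^ p ∂μ) ^ p⁻¹ :=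
        setLIntegral_le_measure_rpow_mul_lintegral_rpow μ hs hf hp
    _ ≤ ENNReal.ofReal δ ^ (1 - p⁻¹) * ENNReal.ofReal M ^ p⁻¹ := by gcongr
    _ = ENNReal.ofReal (δ ^ (1 - p⁻¹) * M ^ p⁻¹) := by
        rw [ENNReal.ofReal_rpow_of_nonneg hδ hq₀, ENNReal.ofReal_rpow_of_nonneg hM hp₀.le,
          ENNReal.ofReal_mul (by positivity)]

lemma rpow_one_sub_inv_mul_mul_pow_rpow_inv {δ a c : ℝ} (hδ : 0 < δ) (ha : 0 ≤ a) (hc : 0 ≤ c)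
    {n : ℕ} (hn : n ≠ 0) :
    δ ^ (1 - (n : ℝ)⁻¹) * (a * c ^ n) ^ (n : ℝ)⁻¹ = δ * (a / δ) ^ (n : ℝ)⁻¹ * c := by
  rw [mul_rpow ha (by positivity), pow_rpow_inv_natCast hc hn, div_rpow ha hδ.le,
    rpow_sub hδ, rpow_one]
  field_simp

lemma rpow_inv_natCeil_log_mul_le {x : ℝ} (hx : 1 ≤ x) :
    x ^ (⌈log x⌉₊ : ℝ)⁻¹ * ⌈log x⌉₊ ≤ 5 * log (3 * x) := by
  set P := ⌈log x⌉₊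
  have hlogx : 0 ≤ log x := log_nonneg hx
  have hlog3 : 1 < log 3 := by
    rw [lt_log_iff_exp_lt (by norm_num)]
    exact exp_one_lt_d9.trans (by norm_num)
  rw [log_mul (by norm_num) (by positivity)]
  rcases Nat.eq_zero_or_pos P with hP | hP
  · rw [hP]
    simp only [Nat.cast_zero, mul_zero]
    positivity
  have hroot : x ^ (P : ℝ)⁻¹ ≤ exp 1 := by
    rw [rpow_def_of_pos (by positivity), exp_le_exp, ← div_eq_mul_inv,
      div_le_one (by exact_mod_cast hP)]
    exact Nat.le_ceil _
  have hPlt : (P : ℝ) < log x + 1 := Nat.ceil_lt_add_one hlogx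
  have he : exp 1 < 2.7182818286 := exp_one_lt_d9
  -- `e (log x + 1) ≤ 5 (log 3 + log x)` because `log 3 > 1`
  nlinarith [exp_pos 1]

lemma one_lt_natCeil_log {x : ℝ} (hx : 3 ≤ x) : 1 < ⌈log x⌉₊ := by
  refine Nat.lt_ceil.2 (lt_of_lt_of_le ?_ (log_le_log (by norm_num) hx))
  rw [Nat.cast_one, lt_log_iff_exp_lt (by norm_num)]
  exact exp_one_lt_d9.trans (by norm_num)

theorem expected_max_gaussian_sq_norm_on_event_general (σ : ℝ) (d T : ℕ)
    (hT : 2 < T) (δ : ℝ) (hδ0 : 0 < δ) (hδ1 : δ ≤ 1)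
    (E : Set (Fin T → Fin d → ℝ)) (hE : MeasurableSet E)
    (hEδ : (Measure.pi fun _ : Fin T =>
        (Measure.pi fun _ : Fin d => gaussianReal 0 ⟨σ ^ 2, sq_nonneg σ⟩)) E
      ≤ ENNReal.ofReal δ) :
    ∫ w : Fin T → Fin d → ℝ,
        E.indicator (fun w => ⨆ t : Fin T, ∑ i, w t i ^ 2) w
        ∂(Measure.pi fun _ : Fin T =>
            (Measure.pi fun _ : Fin d => gaussianReal 0 ⟨σ ^ 2, sq_nonneg σ⟩))
      ≤ 5 * σ ^ 2 * d * δ * Real.log (3 * T / δ) := by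
  have : NeZero T := ⟨by omega⟩
  set P := ⌈log (T / δ)⌉₊
  have hTδ : 3 ≤ T / δ := by
    rw [le_div_iff₀ hδ0]
    nlinarith [show (3 : ℝ) ≤ T by exact_mod_cast hT]
  have hP : 1 < (P : ℝ) := by exact_mod_cast one_lt_natCeil_log hTδ
  have hmeas : Measurable fun w : Fin T → Fin d → ℝ => ⨆ t, ∑ i, w t i ^ 2 :=
    Measurable.iSup fun t => by fun_prop
  have hmoment :=
    lintegral_ofReal_iSup_sum_sq_pow_le (ι := Fin T) (κ := Fin d) ⟨σ ^ 2, sq_nonneg σ⟩ P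
  simp only [Fintype.card_fin, ← ENNReal.rpow_natCast] at hmoment
  rw [integral_indicator hE, integral_eq_lintegral_of_nonneg_ae
    (ae_of_all _ fun w => Real.iSup_nonneg fun t => sum_nonneg fun i _ => sq_nonneg _)
    hmeas.aestronglyMeasurable]
  have hlog : 0 ≤ log (3 * T / δ) := log_nonneg (by rw [mul_div_assoc]; linarith)
  refine ENNReal.toReal_le_of_le_ofReal (by positivity) ?_
  calc _ ≤ ENNReal.ofReal (δ ^ (1 - (P : ℝ)⁻¹) * (T * (σ ^ 2 * d * P) ^ P) ^ (P : ℝ)⁻¹) :=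
        setLIntegral_le_ofReal_rpow_mul_rpow hE hmeas.ennreal_ofReal.aemeasurable hP hδ0.le
          (by positivity) hEδ hmoment
    _ = ENNReal.ofReal (δ * (T / δ) ^ (P : ℝ)⁻¹ * P * (σ ^ 2 * d)) := by
        rw [rpow_one_sub_inv_mul_mul_pow_rpow_inv hδ0 (by positivity) (by positivity)
          (by exact_mod_cast (zero_lt_one.trans hP).ne')]
        ring_nf
    _ ≤ ENNReal.ofReal (5 * σ ^ 2 * d * δ * Real.log (3 * T / δ)) := by
        refine ENNReal.ofReal_le_ofReal ?_
        have := rpow_inv_natCeil_log_mul_le (x := T / δ) (by linarith)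
        rw [mul_div_assoc]
        linear_combination (δ * (σ ^ 2 * d)) * this

/-- **Lemma (expected maximal squared Gaussian norm restricted to a rare event).**
Let `w_1, …, w_T` be i.i.d. random vectors in `ℝ^d`, each a centered Gaussian with
covariance `σ²I`, suppose `T > 2`, and let `E` be any event with `P(E) ≤ δ` for some
`δ ∈ (0,1]`.  Then `E[1_E · max_{1 ≤ t ≤ T} ‖w_t‖²] ≤ 5σ²dδ·log(3T/δ)`
(Euclidean norm; `1_E` is the indicator of `E`). -/
theorem expected_max_gaussian_sq_norm_on_event (σ : ℝ) (hσ : 0 < σ) (d T : ℕ)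
    (hd : 0 < d) (hT : 2 < T) (δ : ℝ) (hδ0 : 0 < δ) (hδ1 : δ ≤ 1)
    (E : Set (Fin T → Fin d → ℝ)) (hE : MeasurableSet E)
    (hEδ : (Measure.pi fun _ : Fin T =>
        (Measure.pi fun _ : Fin d => gaussianReal 0 ⟨σ ^ 2, sq_nonneg σ⟩)) E
      ≤ ENNReal.ofReal δ) :
    ∫ w : Fin T → Fin d → ℝ,
        E.indicator (fun w => ⨆ t : Fin T, ∑ i, w t i ^ 2) w
        ∂(Measure.pi fun _ : Fin T =>
            (Measure.pi fun _ : Fin d => gaussianReal 0 ⟨σ ^ 2, sq_nonneg σ⟩))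
      ≤ 5 * σ ^ 2 * d * δ * Real.log (3 * T / δ) :=
  expected_max_gaussian_sq_norm_on_event_general σ d T hT δ hδ0 hδ1 E hE hEδ
end

section
/- Let λ > 0 and let z_1, …, z_{t−1} ∈ ℝ^m be vectors with ‖z_s‖² ≤ λ for all s (Euclidean norm). Define V_t = λI + Σ_{s=1}^{t−1} z_s z_sᵀ and V_1 = λI. Then log(det(V_t)/det(V_1)) ≤ m log t for every integer t ≥ 1. -/
/-!
The Rayleigh quotient of `V_t = λI + Σ z_s z_sᵀ` is `λ + Σ ⟨z_s, v⟩² ≤ λ + Σ ‖z_s‖² ≤ tλ` on unit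
vectors `v` (Cauchy–Schwarz), so every eigenvalue of `V_t` lies in `[0, tλ]` and
`det V_t ≤ (tλ)^m = t^m det V_1`.
-/

open Matrix

namespace Matrix

variable {ι n : Type*} [Fintype n]

lemma dotProduct_vecMulVec_self_mulVec (z v : n → ℝ) :
    v ⬝ᵥ (vecMulVec z z *ᵥ v) = (z ⬝ᵥ v) ^ 2 := by
  rw [vecMulVec_mulVec, dotProduct_smul, op_smul_eq_mul, dotProduct_comm v z, sq]

lemma dotProduct_sq_le_mul (z v : n → ℝ) : (z ⬝ᵥ v) ^ 2 ≤ (z ⬝ᵥ z) * (v ⬝ᵥ v) := by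
  simpa only [dotProduct, sq] using Finset.sum_mul_sq_le_sq_mul_sq Finset.univ z v

lemma posSemidef_sum_vecMulVec_self (S : Finset ι) (z : ι → n → ℝ) :
    (∑ s ∈ S, vecMulVec (z s) (z s)).PosSemidef :=
  posSemidef_sum S fun s _ => by simpa using posSemidef_vecMulVec_self_star (z s)

variable [DecidableEq n]

lemma IsHermitian.eigenvalues_le {A : Matrix n n ℝ} (hA : A.IsHermitian) {b : ℝ}
    (h : ∀ v, v ⬝ᵥ (A *ᵥ v) ≤ b * (v ⬝ᵥ v)) (i : n) : hA.eigenvalues i ≤ b := by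
  have hunit : ⇑(hA.eigenvectorBasis i) ⬝ᵥ ⇑(hA.eigenvectorBasis i) = 1 := by
    have := real_inner_self_eq_norm_sq (hA.eigenvectorBasis i)
    rwa [hA.eigenvectorBasis.orthonormal.1 i, EuclideanSpace.inner_eq_star_dotProduct, star_trivial,
      one_pow] at this
  simpa [hA.eigenvalues_eq i, hunit] using h (hA.eigenvectorBasis i)

lemma PosSemidef.det_le_pow {A : Matrix n n ℝ} (hA : A.PosSemidef) {b : ℝ}
    (h : ∀ v, v ⬝ᵥ (A *ᵥ v) ≤ b * (v ⬝ᵥ v)) : A.det ≤ b ^ Fintype.card n := by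
  rw [hA.isHermitian.det_eq_prod_eigenvalues, ← Finset.card_univ, ← Finset.prod_const]
  exact Finset.prod_le_prod (fun i _ => hA.eigenvalues_nonneg i)
    (fun i _ => hA.isHermitian.eigenvalues_le h i)

noncomputable def regularizedGram (lam : ℝ) (S : Finset ι) (z : ι → n → ℝ) : Matrix n n ℝ :=
  lam • 1 + ∑ s ∈ S, vecMulVec (z s) (z s)

lemma dotProduct_regularizedGram_mulVec (lam : ℝ) (S : Finset ι) (z : ι → n → ℝ)
    (v : n → ℝ) :
    v ⬝ᵥ (regularizedGram lam S z *ᵥ v) = lam * (v ⬝ᵥ v) + ∑ s ∈ S, (z s ⬝ᵥ v) ^ 2 := by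
  simp only [regularizedGram, add_mulVec, smul_mulVec, one_mulVec, sum_mulVec, dotProduct_add,
    dotProduct_smul, dotProduct_sum, dotProduct_vecMulVec_self_mulVec, smul_eq_mul]

lemma posDef_regularizedGram {lam : ℝ} (hlam : 0 < lam) (S : Finset ι) (z : ι → n → ℝ) :
    (regularizedGram lam S z).PosDef :=
  (PosDef.one.smul hlam).add_posSemidef (posSemidef_sum_vecMulVec_self S z)

lemma det_regularizedGram_le {lam : ℝ} (hlam : 0 ≤ lam) (S : Finset ι) (z : ι → n → ℝ) :
    (regularizedGram lam S z).det ≤ (lam + ∑ s ∈ S, z s ⬝ᵥ z s) ^ Fintype.card n := by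
  have hpsd : (regularizedGram lam S z).PosSemidef :=
    (PosSemidef.one.smul hlam).add (posSemidef_sum_vecMulVec_self S z)
  refine hpsd.det_le_pow fun v => ?_
  rw [dotProduct_regularizedGram_mulVec, add_mul, Finset.sum_mul]
  gcongr with s
  exact dotProduct_sq_le_mul (z s) v

end Matrix

/-- **Lemma (log-determinant bound for the regularized Gram matrix).**
Let `λ > 0` and let `z_1, …, z_{t−1} ∈ ℝ^m` with `‖z_s‖² ≤ λ` for all `s`
(Euclidean norm).  With `V_t = λI + Σ_{s=1}^{t−1} z_s z_sᵀ` and `V_1 = λI`,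
we have `log(det V_t / det V_1) ≤ m·log t` for every integer `t ≥ 1`. -/
theorem log_det_gram_bound (m : ℕ) (lam : ℝ) (hlam : 0 < lam)
    (t : ℕ) (ht : 1 ≤ t) (z : ℕ → Fin m → ℝ)
    (hz : ∀ s ∈ Finset.Icc 1 (t - 1), ∑ i, z s i ^ 2 ≤ lam) :
    Real.log
        ((lam • (1 : Matrix (Fin m) (Fin m) ℝ)
            + ∑ s ∈ Finset.Icc 1 (t - 1), vecMulVec (z s) (z s)).det
          / (lam • (1 : Matrix (Fin m) (Fin m) ℝ)).det)
      ≤ m * Real.log t := by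
  set S := Finset.Icc 1 (t - 1)
  have hsum : lam + ∑ s ∈ S, z s ⬝ᵥ z s ≤ t * lam := by
    have hcard : (1 + S.card : ℝ) = t := by
      rw [Nat.card_Icc, Nat.add_sub_cancel]
      exact_mod_cast Nat.add_sub_cancel' ht
    have := Finset.sum_le_card_nsmul S (fun s => z s ⬝ᵥ z s) lam
      fun s hs => by simpa only [dotProduct, sq] using hz s hs
    rw [← hcard, add_mul, one_mul, ← nsmul_eq_mul]
    linarith
  have hdet_le : (regularizedGram lam S z).det ≤ (t * lam) ^ m := by
    refine (det_regularizedGram_le hlam.le S z).trans ?_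
    rw [Fintype.card_fin]
    refine pow_le_pow_left₀ (add_nonneg hlam.le (Finset.sum_nonneg fun s _ => ?_)) hsum m
    simpa using dotProduct_star_self_nonneg (z s)
  have hdet_pos := (posDef_regularizedGram hlam S z).det_pos
  change Real.log ((regularizedGram lam S z).det / _) ≤ _
  rw [det_smul, det_one, mul_one, Fintype.card_fin, ← Real.log_pow]
  refine Real.log_le_log (by positivity) ?_
  rwa [div_le_iff₀ (by positivity), ← mul_pow]
end

section
/- Let M_1, …, M_l ∈ ℝ^{d×d} each be (κ,γ)-strongly stable matrices, and let t_1 < t_2 < … < t_{l+1} be integers with τ := min_i (t_{i+1} − t_i) ≥ γ⁻¹ log(2κ). Given vectors w_t ∈ ℝ^d and an initial state x_{t_1} ∈ ℝ^d, define the trajectory by x_{t+1} = M_i x_t + w_t for t_i ≤ t < t_{i+1} (for each i = 1,…,l). Let W = max_{t_1 ≤ t < t_{l+1}} ‖w_t‖. Then for every t with t_1 ≤ t ≤ t_{l+1}, ‖x_t‖ ≤ 3κ · max{ ‖x_{t_1}‖/2, (κ/γ)·W }, where ‖·‖ on vectors is the Euclidean norm. -/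
noncomputable section

/-- The operator (spectral) norm of a real matrix: the operator norm of the induced
linear map between Euclidean spaces. -/
def opNorm {m n : ℕ} (A : Matrix (Fin m) (Fin n) ℝ) : ℝ :=
  ‖LinearMap.toContinuousLinearMap (Matrix.toEuclideanLin A)‖

/-- Euclidean norm of a vector in `ℝ^d`. -/
def vnorm {d : ℕ} (x : Fin d → ℝ) : ℝ := Real.sqrt (∑ i, x i ^ 2)

/-- A matrix `M` is `(κ,γ)`-strongly stable (for `κ ≥ 1` and `0 < γ ≤ 1`) if
`M = H L H⁻¹` for some invertible `H` and some `L` with `‖L‖ ≤ 1 − γ` and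
`‖H‖·‖H⁻¹‖ ≤ κ`, where `‖·‖` is the operator (spectral) norm. -/
def StronglyStable {d : ℕ} (κ γ : ℝ) (M : Matrix (Fin d) (Fin d) ℝ) : Prop :=
  1 ≤ κ ∧ 0 < γ ∧ γ ≤ 1 ∧
    ∃ H L : Matrix (Fin d) (Fin d) ℝ, IsUnit H ∧ M = H * L * H⁻¹ ∧
      opNorm L ≤ 1 - γ ∧ opNorm H * opNorm H⁻¹ ≤ κ

/-!
In the coordinates `y = H⁻¹ x` of a `(κ,γ)`-strongly stable `M = H L H⁻¹` the dynamics contract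
by `1 - γ` per step, so along the `i`-th segment
`‖x_t‖ ≤ κ (1 - γ)^(t - t_i) ‖x_{t_i}‖ + (κ/γ) W`.
The dwell-time condition gives `κ (1 - γ)^τ ≤ κ e^(-γτ) ≤ 1/2`, so with
`B = max (‖x_{t_1}‖/2) ((κ/γ) W)` the state at every switching time is at most `2B`,
and inside a segment at most `κ · 2B + B ≤ 3κB`.
-/

open scoped Matrix

lemma vnorm_eq_norm_toLp {d : ℕ} (x : Fin d → ℝ) : vnorm x = ‖WithLp.toLp 2 x‖ := by
  simp [vnorm, EuclideanSpace.norm_eq, sq_abs]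

lemma vnorm_nonneg {d : ℕ} (x : Fin d → ℝ) : 0 ≤ vnorm x := Real.sqrt_nonneg _

lemma vnorm_add_le {d : ℕ} (x y : Fin d → ℝ) : vnorm (x + y) ≤ vnorm x + vnorm y := by
  simpa only [vnorm_eq_norm_toLp, WithLp.toLp_add] using norm_add_le _ _

lemma opNorm_nonneg {m n : ℕ} (A : Matrix (Fin m) (Fin n) ℝ) : 0 ≤ opNorm A :=
  norm_nonneg _

lemma vnorm_mulVec_le {m n : ℕ} (A : Matrix (Fin m) (Fin n) ℝ) (v : Fin n → ℝ) :
    vnorm (A *ᵥ v) ≤ opNorm A * vnorm v := by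
  simpa [vnorm_eq_norm_toLp, opNorm] using
    (LinearMap.toContinuousLinearMap (Matrix.toEuclideanLin A)).le_opNorm (WithLp.toLp 2 v)

lemma le_ciSup₂_of_mem_finset {f : ℕ → ℝ} {S : Finset ℕ} {s : ℕ} (hs : s ∈ S) :
    f s ≤ ⨆ s ∈ S, f s := by
  refine le_ciSup₂ (f := fun s _ => f s) ((S.image f).bddAbove.mono ?_) s hs
  rintro _ ⟨_, ⟨i, rfl⟩, ⟨hi, rfl⟩⟩
  exact Finset.mem_image_of_mem f hi

lemma le_pow_mul_add_div_of_le_mul_add {a : ℕ → ℝ} {γ c : ℝ} {t₀ t₁ : ℕ} (hγ : 0 < γ)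
    (hγ1 : γ ≤ 1) (hc : 0 ≤ c) (ha : ∀ t, t₀ ≤ t → t < t₁ → a (t + 1) ≤ (1 - γ) * a t + c) :
    ∀ t, t₀ ≤ t → t ≤ t₁ → a t ≤ (1 - γ) ^ (t - t₀) * a t₀ + c / γ := by
  intro t ht
  induction t, ht using Nat.le_induction with
  | base => intro _; simp only [Nat.sub_self, pow_zero, one_mul]; linarith [div_nonneg hc hγ.le]
  | succ t ht ih =>
    intro ht₁
    have h1γ : 0 ≤ 1 - γ := by linarith
    calc a (t + 1) ≤ (1 - γ) * a t + c := ha t ht ht₁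
      _ ≤ (1 - γ) * ((1 - γ) ^ (t - t₀) * a t₀ + c / γ) + c := by
        gcongr; exact ih (Nat.le_of_succ_le ht₁)
      _ = (1 - γ) ^ (t + 1 - t₀) * a t₀ + c / γ := by
        rw [Nat.sub_add_comm ht, pow_succ]; field_simp; ring

lemma StronglyStable.vnorm_trajectory_le {d : ℕ} {κ γ W : ℝ} {M : Matrix (Fin d) (Fin d) ℝ}
    (hM : StronglyStable κ γ M) {x w : ℕ → Fin d → ℝ} {t₀ t₁ : ℕ} (hW0 : 0 ≤ W)
    (hW : ∀ t, t₀ ≤ t → t < t₁ → vnorm (w t) ≤ W)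
    (hx : ∀ t, t₀ ≤ t → t < t₁ → x (t + 1) = M *ᵥ x t + w t) :
    ∀ t, t₀ ≤ t → t ≤ t₁ → vnorm (x t) ≤ κ * (1 - γ) ^ (t - t₀) * vnorm (x t₀) + κ / γ * W := by
  obtain ⟨-, hγ, hγ1, H, L, hH, rfl, hL, hκ⟩ := hM
  have hdet := (Matrix.isUnit_iff_isUnit_det H).mp hH
  set y : ℕ → Fin d → ℝ := fun t => H⁻¹ *ᵥ x t
  have hy : ∀ t, t₀ ≤ t → t < t₁ →
      vnorm (y (t + 1)) ≤ (1 - γ) * vnorm (y t) + opNorm H⁻¹ * W := by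
    intro t h₀ h₁
    have hyt : y (t + 1) = L *ᵥ y t + H⁻¹ *ᵥ w t := by
      simp only [y, hx t h₀ h₁, Matrix.mulVec_add, Matrix.mulVec_mulVec, ← mul_assoc,
        Matrix.nonsing_inv_mul _ hdet, one_mul]
    calc vnorm (y (t + 1)) ≤ vnorm (L *ᵥ y t) + vnorm (H⁻¹ *ᵥ w t) := by
          rw [hyt]; exact vnorm_add_le _ _
      _ ≤ opNorm L * vnorm (y t) + opNorm H⁻¹ * vnorm (w t) :=
          add_le_add (vnorm_mulVec_le _ _) (vnorm_mulVec_le _ _)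
      _ ≤ (1 - γ) * vnorm (y t) + opNorm H⁻¹ * W :=
          add_le_add (mul_le_mul_of_nonneg_right hL (vnorm_nonneg _))
            (mul_le_mul_of_nonneg_left (hW t h₀ h₁) (opNorm_nonneg _))
  intro t h₀ h₁
  have hyt := le_pow_mul_add_div_of_le_mul_add hγ hγ1 (a := fun t => vnorm (y t))
    (mul_nonneg (opNorm_nonneg H⁻¹) hW0) hy t h₀ h₁
  have hpow : 0 ≤ (1 - γ) ^ (t - t₀) := pow_nonneg (by linarith) _
  have hH0 := opNorm_nonneg H
  calc vnorm (x t) = vnorm (H *ᵥ y t) := by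
        simp only [y, Matrix.mulVec_mulVec, Matrix.mul_nonsing_inv _ hdet, Matrix.one_mulVec]
    _ ≤ opNorm H * vnorm (y t) := vnorm_mulVec_le _ _
    _ ≤ opNorm H * ((1 - γ) ^ (t - t₀) * (opNorm H⁻¹ * vnorm (x t₀)) + opNorm H⁻¹ * W / γ) := by
        gcongr
        exact hyt.trans (by gcongr; exact vnorm_mulVec_le _ _)
    _ = opNorm H * opNorm H⁻¹ * ((1 - γ) ^ (t - t₀) * vnorm (x t₀) + W / γ) := by ring
    _ ≤ κ * ((1 - γ) ^ (t - t₀) * vnorm (x t₀) + W / γ) := by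
        gcongr
        exact add_nonneg (mul_nonneg hpow (vnorm_nonneg _)) (div_nonneg hW0 hγ.le)
    _ = κ * (1 - γ) ^ (t - t₀) * vnorm (x t₀) + κ / γ * W := by ring

lemma mul_one_sub_pow_le_half {κ γ : ℝ} {n : ℕ} (hκ : 0 < κ) (hγ : 0 < γ) (hγ1 : γ ≤ 1)
    (hn : Real.log (2 * κ) / γ ≤ n) : κ * (1 - γ) ^ n ≤ 1 / 2 := by
  have hlog : Real.log (2 * κ) ≤ γ * n := by rwa [div_le_iff₀' hγ] at hn
  calc κ * (1 - γ) ^ n ≤ κ * Real.exp (-γ) ^ n := by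
        gcongr (κ * ?_ ^ n)
        exact Real.one_sub_le_exp_neg γ
    _ = κ * Real.exp (-(γ * n)) := by rw [← Real.exp_nat_mul]; ring_nf
    _ ≤ κ * Real.exp (-Real.log (2 * κ)) := by gcongr
    _ = 1 / 2 := by rw [Real.exp_neg, Real.exp_log (by positivity)]; field_simp

lemma Fin.exists_castSucc_le_and_le_succ {l : ℕ} (hl : 0 < l) {f : Fin (l + 1) → ℕ} {t : ℕ}
    (h₀ : f 0 ≤ t) (h₁ : t ≤ f (Fin.last l)) :
    ∃ i : Fin l, f i.castSucc ≤ t ∧ t ≤ f i.succ := by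
  suffices ∀ j : Fin (l + 1), 0 < j → t ≤ f j → ∃ i : Fin l, f i.castSucc ≤ t ∧ t ≤ f i.succ from
    this (Fin.last l) (by simpa [Fin.lt_def] using hl) h₁
  intro j
  induction j using Fin.induction with
  | zero => exact fun h => absurd h (lt_irrefl 0)
  | succ i ih =>
    intro _ hi
    by_cases hlt : f i.castSucc < t
    · exact ⟨i, hlt.le, hi⟩
    rcases eq_or_ne i.castSucc 0 with h0 | h0
    · exact ⟨i, h0 ▸ h₀, hi⟩
    · exact ih (Fin.pos_iff_ne_zero.2 h0) (not_lt.1 hlt)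

/-- **Lemma (state bound under a sequence of strongly stable controllers).**
Let `M_1, …, M_l` be `(κ,γ)`-strongly stable matrices, let `t_1 < … < t_{l+1}` with
`τ := min_i (t_{i+1} − t_i) ≥ γ⁻¹ log(2κ)`, and let the trajectory satisfy
`x_{t+1} = M_i x_t + w_t` for `t_i ≤ t < t_{i+1}`.  With
`W = max_{t_1 ≤ t < t_{l+1}} ‖w_t‖`, for every `t_1 ≤ t ≤ t_{l+1}`:
`‖x_t‖ ≤ 3κ·max{‖x_{t_1}‖/2, (κ/γ)·W}` (Euclidean norms). -/
theorem state_bound_multi_controller (d l : ℕ) (hl : 0 < l) (κ γ : ℝ)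
    (M : Fin l → Matrix (Fin d) (Fin d) ℝ) (hM : ∀ i, StronglyStable κ γ (M i))
    (ti : Fin (l + 1) → ℕ) (hti : StrictMono ti)
    (hτ : ∀ i : Fin l, Real.log (2 * κ) / γ ≤ (ti i.succ : ℝ) - (ti i.castSucc : ℝ))
    (x w : ℕ → Fin d → ℝ)
    (hx : ∀ i : Fin l, ∀ t, ti i.castSucc ≤ t → t < ti i.succ →
      x (t + 1) = (M i).mulVec (x t) + w t) :
    ∀ t, ti 0 ≤ t → t ≤ ti (Fin.last l) →
      vnorm (x t) ≤ 3 * κ * max (vnorm (x (ti 0)) / 2)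
        ((κ / γ) * ⨆ s ∈ Finset.Ico (ti 0) (ti (Fin.last l)), vnorm (w s)) := by
  obtain ⟨hκ, hγ, hγ1, -⟩ := hM ⟨0, hl⟩
  set W := ⨆ s ∈ Finset.Ico (ti 0) (ti (Fin.last l)), vnorm (w s)
  set B := max (vnorm (x (ti 0)) / 2) ((κ / γ) * W)
  have hW0 : 0 ≤ W := Real.iSup_nonneg fun _ => Real.iSup_nonneg fun _ => vnorm_nonneg _
  have hκ₀ : 0 < κ := by linarith
  have hWB : κ / γ * W ≤ B := le_max_right _ _
  have hB0 : 0 ≤ B := (mul_nonneg (div_nonneg hκ₀.le hγ.le) hW0).trans hWB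
  have hwW : ∀ s, ti 0 ≤ s → s < ti (Fin.last l) → vnorm (w s) ≤ W := fun _ h₀ h₁ =>
    le_ciSup₂_of_mem_finset (f := fun s => vnorm (w s)) (Finset.mem_Ico.2 ⟨h₀, h₁⟩)
  have hseg : ∀ i : Fin l, ∀ t, ti i.castSucc ≤ t → t ≤ ti i.succ → vnorm (x t) ≤
      κ * (1 - γ) ^ (t - ti i.castSucc) * vnorm (x (ti i.castSucc)) + κ / γ * W := fun i =>
    (hM i).vnorm_trajectory_le hW0 (fun s h₀ h₁ => hwW s ((hti.monotone (Fin.zero_le _)).trans h₀)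
      (h₁.trans_le (hti.monotone (Fin.le_last _)))) (hx i)
  have hnode : ∀ i, vnorm (x (ti i)) ≤ 2 * B := by
    intro i
    induction i using Fin.induction with
    | zero => linarith [le_max_left (vnorm (x (ti 0)) / 2) (κ / γ * W)]
    | succ i ih =>
      have hlt := hti i.castSucc_lt_succ
      have hdecay := mul_one_sub_pow_le_half (n := ti i.succ - ti i.castSucc) hκ₀ hγ hγ1
        (by rw [Nat.cast_sub hlt.le]; exact hτ i)
      nlinarith [hseg i _ hlt.le le_rfl, vnorm_nonneg (x (ti i.castSucc))]
  intro t h₀ h₁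
  obtain ⟨i, hi₀, hi₁⟩ := Fin.exists_castSucc_le_and_le_succ hl h₀ h₁
  have hpow : κ * (1 - γ) ^ (t - ti i.castSucc) ≤ κ * 1 :=
    mul_le_mul_of_nonneg_left (pow_le_one₀ (by linarith) (by linarith)) hκ₀.le
  calc vnorm (x t)
      ≤ κ * (1 - γ) ^ (t - ti i.castSucc) * vnorm (x (ti i.castSucc)) + κ / γ * W :=
        hseg i t hi₀ hi₁
    _ ≤ κ * 1 * (2 * B) + B :=
        add_le_add (mul_le_mul hpow (hnode _) (vnorm_nonneg _) (by linarith)) hWB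
    _ ≤ 3 * κ * B := by nlinarith

end
end

section
/- Let σ > 0, α₀ > 0, and J > 0 with J ≥ α₀σ². Let A ∈ ℝ^{d×d}, B ∈ ℝ^{d×k}, K ∈ ℝ^{k×d}, and set M = A + BK. Suppose Q ⪰ α₀I and R ⪰ α₀I are symmetric matrices, and P is a symmetric positive definite matrix satisfying P = Q + KᵀRK + MᵀPM with σ²·tr(P) ≤ J. Then, with κ = √(J/(α₀σ²)) and γ = α₀σ²/(2J), the controller K is (κ,γ)-strongly stable: there exist an invertible matrix H and a matrix L with M = H L H⁻¹, ‖L‖ ≤ 1−γ, ‖H‖·‖H⁻¹‖ ≤ κ, and moreover ‖K‖ ≤ κ. -/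
noncomputable section

/-!
Let `M = A + BK`. Reading the Lyapunov equation `P = Q + KᵀRK + MᵀPM` in the Loewner order
gives `α₀ KᵀK ≤ P`, `α₀ I ≤ P` and `MᵀPM ≤ P - α₀ I`, while `P ≤ tr(P) I ≤ (J/σ²) I`.
Hence `‖K‖² ≤ J/(α₀σ²)`, `α₀ I ≤ P ≤ (J/σ²) I`, and `MᵀPM ≤ (1 - α₀σ²/J) P`: `M` contracts
the norm `xᵀPx`.
With `S = P^{1/2}`, `H = S⁻¹` and `L = S M S⁻¹` this says `‖L‖² ≤ 1 - α₀σ²/J ≤ (1 - γ)²`,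
and `‖H⁻¹‖² = ‖P‖ ≤ J/σ²`, `‖H‖² = ‖P⁻¹‖ ≤ 1/α₀`.
-/

open Matrix
-- `opNorm A` is definitionally `‖A‖` for the scoped L2 operator norm.
open scoped MatrixOrder Matrix.Norms.L2Operator

lemma Real.sqrt_one_sub_le_one_sub_half {x : ℝ} (hx : x ≤ 1) : √(1 - x) ≤ 1 - x / 2 :=
  Real.sqrt_le_iff.mpr ⟨by linarith, by nlinarith [sq_nonneg x]⟩

namespace Matrix

variable {m n : Type*} [Fintype m] [Fintype n]

lemma PosSemidef.le_trace_smul_one [DecidableEq n] {A : Matrix n n ℝ} (hA : A.PosSemidef) :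
    A ≤ A.trace • (1 : Matrix n n ℝ) := by
  rw [← Algebra.algebraMap_eq_smul_one]
  refine le_algebraMap_of_spectrum_le (fun x hx => ?_) hA.isHermitian.isSelfAdjoint
  obtain ⟨i, rfl⟩ := hA.isHermitian.spectrum_real_eq_range_eigenvalues ▸ hx
  rw [hA.isHermitian.trace_eq_sum_eigenvalues]
  exact Finset.single_le_sum (fun j _ => hA.eigenvalues_nonneg j) (Finset.mem_univ i)

lemma PosDef.exists_transpose_eq_isUnit_det_mul_self_eq [DecidableEq n] {P : Matrix n n ℝ}
    (hP : P.PosDef) : ∃ S : Matrix n n ℝ, Sᵀ = S ∧ IsUnit S.det ∧ S * S = P := by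
  refine ⟨CFC.sqrt P, ?_, ?_, CFC.sqrt_mul_sqrt_self P (nonneg_iff_posSemidef.mpr hP.posSemidef)⟩
  · rw [← conjTranspose_eq_transpose_of_trivial, ← star_eq_conjTranspose]
    exact (IsSelfAdjoint.of_nonneg (CFC.sqrt_nonneg P)).star_eq
  · exact (isUnit_iff_isUnit_det _).mp (isStrictlyPositive_iff_posDef.mpr hP).isUnit_cfcSqrt

lemma transpose_mul_mul_le_transpose_mul_mul {X Y : Matrix m m ℝ} (h : X ≤ Y)
    (C : Matrix m n ℝ) : Cᵀ * X * C ≤ Cᵀ * Y * C := by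
  have h := (le_iff.mp h).conjTranspose_mul_mul_same C
  rwa [conjTranspose_eq_transpose_of_trivial, Matrix.mul_sub, Matrix.sub_mul, ← le_iff] at h

lemma transpose_mul_mul_nonneg {X : Matrix m m ℝ} (h : 0 ≤ X) (C : Matrix m n ℝ) :
    0 ≤ Cᵀ * X * C := by
  simpa using transpose_mul_mul_le_transpose_mul_mul h C

lemma l2_opNorm_le_of_nonneg_of_le [DecidableEq n] {X : Matrix n n ℝ} {c : ℝ} (hc : 0 ≤ c)
    (h₀ : 0 ≤ X) (h : X ≤ c • 1) : ‖X‖ ≤ c := by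
  rw [← Algebra.algebraMap_eq_smul_one, le_algebraMap_iff_spectrum_le] at h
  rw [← cfc_id' ℝ X]
  refine norm_cfc_le hc fun x hx => ?_
  rw [Real.norm_eq_abs, abs_of_nonneg (spectrum_nonneg_of_nonneg h₀ hx)]
  exact h x hx

lemma l2_opNorm_le_sqrt_of_transpose_mul_self_le [DecidableEq n] {A : Matrix m n ℝ} {c : ℝ}
    (hc : 0 ≤ c) (h : Aᵀ * A ≤ c • 1) : ‖A‖ ≤ √c := by
  have hAA : ‖Aᵀ * A‖ ≤ c := l2_opNorm_le_of_nonneg_of_le hc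
    (nonneg_iff_posSemidef.mpr (posSemidef_conjTranspose_mul_self A)) h
  rw [← conjTranspose_eq_transpose_of_trivial, l2_opNorm_conjTranspose_mul_self] at hAA
  exact Real.le_sqrt_of_sq_le (by nlinarith)

section Symmetric

variable [DecidableEq n] {S : Matrix n n ℝ}

lemma l2_opNorm_le_sqrt_of_mul_self_le (hS : Sᵀ = S) {c : ℝ} (hc : 0 ≤ c)
    (h : S * S ≤ c • 1) : ‖S‖ ≤ √c :=
  l2_opNorm_le_sqrt_of_transpose_mul_self_le hc (by rwa [hS])

lemma transpose_nonsing_inv_mul_mul_self_mul_nonsing_inv (hS : Sᵀ = S) (hSu : IsUnit S.det) :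
    (S⁻¹)ᵀ * (S * S) * S⁻¹ = 1 := by
  rw [transpose_nonsing_inv, hS, ← Matrix.mul_assoc, nonsing_inv_mul _ hSu, Matrix.one_mul,
    mul_nonsing_inv _ hSu]

lemma l2_opNorm_nonsing_inv_le_sqrt_inv_of_le_mul_self (hS : Sᵀ = S) (hSu : IsUnit S.det)
    {c : ℝ} (hc : 0 < c) (h : c • 1 ≤ S * S) : ‖S⁻¹‖ ≤ √c⁻¹ := by
  refine l2_opNorm_le_sqrt_of_transpose_mul_self_le (inv_nonneg.mpr hc.le) ?_
  have h' := transpose_mul_mul_le_transpose_mul_mul h S⁻¹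
  rw [transpose_nonsing_inv_mul_mul_self_mul_nonsing_inv hS hSu, Matrix.mul_smul, Matrix.mul_one,
    Matrix.smul_mul] at h'
  exact (le_inv_smul_iff_of_pos hc).mpr h'

lemma l2_opNorm_mul_mul_nonsing_inv_le_sqrt (hS : Sᵀ = S) (hSu : IsUnit S.det)
    {M : Matrix n n ℝ} {ρ : ℝ} (hρ : 0 ≤ ρ) (h : Mᵀ * (S * S) * M ≤ ρ • (S * S)) :
    ‖S * M * S⁻¹‖ ≤ √ρ := by
  refine l2_opNorm_le_sqrt_of_transpose_mul_self_le hρ ?_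
  have h' := transpose_mul_mul_le_transpose_mul_mul h S⁻¹
  rw [Matrix.mul_smul, Matrix.smul_mul, transpose_nonsing_inv_mul_mul_self_mul_nonsing_inv hS hSu]
    at h'
  convert h' using 1
  simp only [transpose_mul, hS, Matrix.mul_assoc]

end Symmetric

section Lyapunov

variable {Q P M : Matrix n n ℝ} {R : Matrix m m ℝ} {K : Matrix m n ℝ}
  {α c : ℝ}

lemma transpose_mul_mul_add_smul_one_le_of_lyapunov [DecidableEq n] (hQ : α • 1 ≤ Q)
    (hR : 0 ≤ R) (hLyap : P = Q + Kᵀ * R * K + Mᵀ * P * M) : Mᵀ * P * M + α • 1 ≤ P := by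
  calc Mᵀ * P * M + α • 1 ≤ Mᵀ * P * M + (Q + Kᵀ * R * K) := by
        gcongr; exact le_add_of_le_of_nonneg hQ (transpose_mul_mul_nonneg hR K)
    _ = P := (add_comm _ _).trans hLyap.symm

lemma smul_one_le_of_lyapunov [DecidableEq n] (hQ : α • 1 ≤ Q) (hR : 0 ≤ R) (hP : 0 ≤ P)
    (hLyap : P = Q + Kᵀ * R * K + Mᵀ * P * M) : α • 1 ≤ P :=
  (le_add_of_nonneg_left (transpose_mul_mul_nonneg hP M)).trans
    (transpose_mul_mul_add_smul_one_le_of_lyapunov hQ hR hLyap)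

lemma transpose_mul_mul_le_smul_of_lyapunov [DecidableEq n] (hα : 0 ≤ α) (hc : 0 < c)
    (hQ : α • 1 ≤ Q) (hR : 0 ≤ R) (hPc : P ≤ c • 1) (hLyap : P = Q + Kᵀ * R * K + Mᵀ * P * M) :
    Mᵀ * P * M ≤ (1 - α / c) • P := by
  have hαP : (α / c) • P ≤ α • 1 := by
    calc (α / c) • P ≤ (α / c) • c • (1 : Matrix n n ℝ) := by gcongr
      _ = α • 1 := by rw [smul_smul, div_mul_cancel₀ α hc.ne']
  calc Mᵀ * P * M ≤ P - α • 1 :=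
        le_sub_iff_add_le.mpr (transpose_mul_mul_add_smul_one_le_of_lyapunov hQ hR hLyap)
    _ ≤ P - (α / c) • P := sub_le_sub_left hαP P
    _ = (1 - α / c) • P := by rw [sub_smul, one_smul]

lemma smul_transpose_mul_self_le_of_lyapunov [DecidableEq m] (hQ : 0 ≤ Q) (hR : α • 1 ≤ R)
    (hP : 0 ≤ P) (hLyap : P = Q + Kᵀ * R * K + Mᵀ * P * M) : α • (Kᵀ * K) ≤ P := by
  calc α • (Kᵀ * K) ≤ Kᵀ * R * K := by simpa using transpose_mul_mul_le_transpose_mul_mul hR K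
    _ ≤ Q + Kᵀ * R * K + Mᵀ * P * M :=
        le_add_of_le_of_nonneg (le_add_of_nonneg_left hQ) (transpose_mul_mul_nonneg hP M)
    _ = P := hLyap.symm

lemma l2_opNorm_le_sqrt_div_of_lyapunov [DecidableEq m] [DecidableEq n] (hα : 0 < α)
    (hc : 0 ≤ c) (hQ : 0 ≤ Q) (hR : α • 1 ≤ R) (hP : 0 ≤ P) (hPc : P ≤ c • 1)
    (hLyap : P = Q + Kᵀ * R * K + Mᵀ * P * M) :
    ‖K‖ ≤ √(c / α) := by
  refine l2_opNorm_le_sqrt_of_transpose_mul_self_le (div_nonneg hc hα.le) ?_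
  rw [div_eq_inv_mul, ← smul_smul, le_inv_smul_iff_of_pos hα]
  exact (smul_transpose_mul_self_le_of_lyapunov hQ hR hP hLyap).trans hPc

end Lyapunov

end Matrix

/-- **Lemma (cost-to-stability).**
Let `σ, α₀ > 0` and `J ≥ α₀σ²`.  Let `M = A + BK`, suppose `Q ⪰ α₀I` and `R ⪰ α₀I`
are symmetric, and `P ≻ 0` solves `P = Q + KᵀRK + MᵀPM` with `σ²·tr(P) ≤ J`.  Then,
with `κ = √(J/(α₀σ²))` and `γ = α₀σ²/(2J)`, the controller `K` is `(κ,γ)`-strongly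
stable: `‖K‖ ≤ κ` and there exist an invertible `H` and `L` with `M = H L H⁻¹`,
`‖L‖ ≤ 1−γ`, `‖H‖·‖H⁻¹‖ ≤ κ` (operator norms). -/
theorem cost_to_strong_stability (d k : ℕ) (σ α₀ J : ℝ)
    (hσ : 0 < σ) (hα₀ : 0 < α₀) (hJ : 0 < J) (hJα : α₀ * σ ^ 2 ≤ J)
    (A : Matrix (Fin d) (Fin d) ℝ) (B : Matrix (Fin d) (Fin k) ℝ)
    (K : Matrix (Fin k) (Fin d) ℝ)
    (Q : Matrix (Fin d) (Fin d) ℝ) (R : Matrix (Fin k) (Fin k) ℝ)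
    (hQ : (Q - α₀ • (1 : Matrix (Fin d) (Fin d) ℝ)).PosSemidef)
    (hR : (R - α₀ • (1 : Matrix (Fin k) (Fin k) ℝ)).PosSemidef)
    (P : Matrix (Fin d) (Fin d) ℝ) (hP : P.PosDef)
    (hLyap : P = Q + Kᵀ * R * K + (A + B * K)ᵀ * P * (A + B * K))
    (hcost : σ ^ 2 * Matrix.trace P ≤ J) :
    opNorm K ≤ Real.sqrt (J / (α₀ * σ ^ 2)) ∧
      ∃ H L : Matrix (Fin d) (Fin d) ℝ, IsUnit H ∧
        A + B * K = H * L * H⁻¹ ∧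
        opNorm L ≤ 1 - α₀ * σ ^ 2 / (2 * J) ∧
        opNorm H * opNorm H⁻¹ ≤ Real.sqrt (J / (α₀ * σ ^ 2)) := by
  set M := A + B * K
  have hσ2 : 0 < σ ^ 2 := by positivity
  have hQ₀ : 0 ≤ Q := (smul_nonneg hα₀.le zero_le_one).trans hQ
  have hR₀ : 0 ≤ R := (smul_nonneg hα₀.le zero_le_one).trans hR
  have hP₀ : 0 ≤ P := nonneg_iff_posSemidef.mpr hP.posSemidef
  have hPc : P ≤ (J / σ ^ 2) • 1 := hP.posSemidef.le_trace_smul_one.trans <|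
    smul_le_smul_of_nonneg_right ((le_div_iff₀' hσ2).mpr hcost) zero_le_one
  have hαP : α₀ • 1 ≤ P := smul_one_le_of_lyapunov hQ hR₀ hP₀ hLyap
  have hMP := transpose_mul_mul_le_smul_of_lyapunov hα₀.le (by positivity) hQ hR₀ hPc hLyap
  obtain ⟨S, hS, hSu, rfl⟩ := hP.exists_transpose_eq_isUnit_det_mul_self_eq
  refine ⟨?_, S⁻¹, S * M * S⁻¹, ?_, ?_, ?_, ?_⟩
  · rw [div_mul_eq_div_div_swap]
    exact l2_opNorm_le_sqrt_div_of_lyapunov hα₀ (by positivity) hQ₀ hR hP₀ hPc hLyap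
  · exact (isUnit_iff_isUnit_det _).mpr (isUnit_nonsing_inv_det S hSu)
  · simp only [nonsing_inv_nonsing_inv S hSu, Matrix.mul_assoc, nonsing_inv_mul _ hSu,
      Matrix.mul_one, ← Matrix.mul_assoc S⁻¹ S, Matrix.one_mul]
  · have hx : α₀ * σ ^ 2 / J ≤ 1 := (div_le_one hJ).mpr hJα
    rw [div_div_eq_mul_div] at hMP
    calc opNorm (S * M * S⁻¹) ≤ √(1 - α₀ * σ ^ 2 / J) :=
          l2_opNorm_mul_mul_nonsing_inv_le_sqrt hS hSu (sub_nonneg.mpr hx) hMP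
      _ ≤ 1 - α₀ * σ ^ 2 / J / 2 := Real.sqrt_one_sub_le_one_sub_half hx
      _ = 1 - α₀ * σ ^ 2 / (2 * J) := by ring
  · rw [nonsing_inv_nonsing_inv S hSu]
    calc opNorm S⁻¹ * opNorm S ≤ √α₀⁻¹ * √(J / σ ^ 2) :=
          mul_le_mul (l2_opNorm_nonsing_inv_le_sqrt_inv_of_le_mul_self hS hSu hα₀ hαP)
            (l2_opNorm_le_sqrt_of_mul_self_le hS (by positivity) hPc) (norm_nonneg _)
            (Real.sqrt_nonneg _)
      _ = √(J / (α₀ * σ ^ 2)) := by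
          rw [← Real.sqrt_mul (inv_nonneg.mpr hα₀.le)]; congr 1; field_simp

end
end
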